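/- arXiv:math/0302014 — 6 statements merged into one kernel-verified Lean document; each statement's English description precedes it below -/
import Mathlib

section
/- For all p,q≥0, the rational functions R_k satisfy the identity 1 − x²·R_p(x²)·R_q(x²) = U_{p+q}(1/(2x)) / (U_p(1/(2x))·U_q(1/(2x))), where U_m denotes the Chebyshev polynomials of the second kind. -/
/-- Chebyshev polynomials of the second kind, as real-valued functions. -/
def chebU : ℕ → ℝ → ℝ
  | 0, _ => 1
  | 1, t => 2 * t
  | (r + 2), t => 2 * t * chebU (r + 1) t - chebU r t

/-- The rational functions `R_k`: `R_0(x) = 0`, `R_k(x) = 1/(1 - x·R_{k-1}(x))`. -/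
noncomputable def Rfun : ℕ → ℝ → ℝ
  | 0, _ => 0
  | (k + 1), x => 1 / (1 - x * Rfun k x)

/-!
Put `t = 1/(2x)`. The recursion `R_{k+1} = 1/(1 - x²R_k)` together with the three-term recurrence
of the `U_k` shows inductively that `x·R_k(x²) = U_{k-1}(t)/U_k(t)`, where `U_k(t) ≠ 0` because
`U_{k+1}(t) = U_k(t)·(1 - x²R_k(x²))/x`. The identity then reduces to the addition formula
`U_{p+q} = U_p U_q - U_{p-1} U_{q-1}`.
-/

open Polynomial Polynomial.Chebyshev

namespace Polynomial.Chebyshev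

variable (R : Type*) [CommRing R]

theorem U_add (m k : ℤ) : U R (m + k) = U R m * U R k - U R (m - 1) * U R (k - 1) := by
  induction k using Polynomial.Chebyshev.induct with
  | zero => simp [U_neg_one]
  | one => simp only [U_add_one, U_one, sub_self, U_zero]; ring
  | add_two k ih1 ih2 =>
    have h₁ := U_add_two R (m + k)
    have h₂ := U_add_two R k
    have h₃ := U_add_one R k
    linear_combination (norm := ring_nf) h₁ - U R m * h₂ + U R (m - 1) * h₃ + 2 * X * ih1 - ih2
  | neg_add_one k ih1 ih2 =>
    have h₁ := U_sub_one R (m - k)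
    have h₂ := U_sub_one R (-k)
    have h₃ := U_sub_one R (-k - 1)
    linear_combination (norm := ring_nf) h₁ - U R m * h₂ + U R (m - 1) * h₃ + 2 * X * ih1 - ih2

end Polynomial.Chebyshev

theorem chebU_eq_eval_U (n : ℕ) (t : ℝ) : chebU n t = (U ℝ n).eval t := by
  induction n using Nat.twoStepInduction with
  | zero => simp [chebU]
  | one => simp [chebU]
  | more n ih₀ ih₁ =>
    rw [chebU, ih₀, ih₁]
    push_cast
    simp [U_add_two]

theorem eval_U_ne_zero_and_mul_Rfun_sq {x : ℝ} (hx : x ≠ 0) (k : ℕ)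
    (hk : ∀ m, m < k → 1 - x ^ 2 * Rfun m (x ^ 2) ≠ 0) :
    (U ℝ k).eval (1 / (2 * x)) ≠ 0 ∧
      x * Rfun k (x ^ 2) * (U ℝ k).eval (1 / (2 * x)) = (U ℝ (k - 1)).eval (1 / (2 * x)) := by
  induction k with
  | zero => simp [Rfun]
  | succ k ih =>
    obtain ⟨hU, hR⟩ := ih fun m hm => hk m (by omega)
    have hd : 1 - x ^ 2 * Rfun k (x ^ 2) ≠ 0 := hk k (by omega)
    have hsucc : (U ℝ (k + 1)).eval (1 / (2 * x)) =
        (U ℝ k).eval (1 / (2 * x)) * (1 - x ^ 2 * Rfun k (x ^ 2)) / x := by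
      rw [U_add_one, eval_sub, eval_mul, eval_mul, ← hR]
      simp only [eval_X, eval_ofNat]
      field_simp
    push_cast
    refine ⟨hsucc ▸ div_ne_zero (mul_ne_zero hU hd) hx, ?_⟩
    rw [hsucc, Rfun, add_sub_cancel_right]
    field_simp

theorem one_sub_sq_mul_R_mul_R_general (p q : ℕ) (x : ℝ) (hx : x ≠ 0)
    (hp : ∀ m, m < p → 1 - x ^ 2 * Rfun m (x ^ 2) ≠ 0)
    (hq : ∀ m, m < q → 1 - x ^ 2 * Rfun m (x ^ 2) ≠ 0) :
    1 - x ^ 2 * Rfun p (x ^ 2) * Rfun q (x ^ 2) =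
      chebU (p + q) (1 / (2 * x)) / (chebU p (1 / (2 * x)) * chebU q (1 / (2 * x))) := by
  obtain ⟨hUp, hRp⟩ := eval_U_ne_zero_and_mul_Rfun_sq hx p hp
  obtain ⟨hUq, hRq⟩ := eval_U_ne_zero_and_mul_Rfun_sq hx q hq
  simp only [chebU_eq_eval_U, Nat.cast_add, U_add, eval_sub, eval_mul]
  rw [eq_div_iff (mul_ne_zero hUp hUq)]
  linear_combination -(x * Rfun q (x ^ 2) * (U ℝ q).eval (1 / (2 * x))) * hRp -
    (U ℝ (p - 1)).eval (1 / (2 * x)) * hRq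

/-- For all `p, q ≥ 0`,
`1 − x²·R_p(x²)·R_q(x²) = U_{p+q}(1/(2x)) / (U_p(1/(2x))·U_q(1/(2x)))`,
for every `x` in a domain where all the denominators involved are nonzero. -/
theorem one_sub_sq_mul_R_mul_R (p q : ℕ) (x : ℝ) (hx : x ≠ 0)
    (hp : ∀ m, m < p → 1 - x ^ 2 * Rfun m (x ^ 2) ≠ 0)
    (hq : ∀ m, m < q → 1 - x ^ 2 * Rfun m (x ^ 2) ≠ 0)
    (hUp : chebU p (1 / (2 * x)) ≠ 0) (hUq : chebU q (1 / (2 * x)) ≠ 0) :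
    1 - x ^ 2 * Rfun p (x ^ 2) * Rfun q (x ^ 2) =
      chebU (p + q) (1 / (2 * x)) / (chebU p (1 / (2 * x)) * chebU q (1 / (2 * x))) :=
  one_sub_sq_mul_R_mul_R_general p q x hx hp hq
end

section
/- For all p,q≥0, the rational functions R_k satisfy the identity 1 − x²·(R_p(x²) + R_q(x²)) = x·U_{p+q+1}(1/(2x)) / (U_p(1/(2x))·U_q(1/(2x))), where U_m denotes the Chebyshev polynomials of the second kind. -/
/-!
With `2xt = 1`, the continued fraction `R_k(x²)` is the ratio `U_{k-1}(t) / (x U_k(t))`, i.e.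
`(1 - x² R_k(x²)) U_k(t) = x U_{k+1}(t)`, since both sides obey the three-term recurrence of `U`.
Summing the instances for `p` and `q`, the identity reduces to the addition formula
`U_{p+q+1} = U_{p+1} U_q - U_p U_{q-1}`.
-/

theorem chebU_add_two (n : ℕ) (t : ℝ) :
    chebU (n + 2) t = 2 * t * chebU (n + 1) t - chebU n t :=
  rfl

/-- Here `2t U_n - U_{n+1}` stands for `U_{n-1}`, which keeps the formula valid at `n = 0`. -/
theorem chebU_add_add_one (m n : ℕ) (t : ℝ) :
    chebU (m + n + 1) t =
      chebU (m + 1) t * chebU n t - chebU m t * (2 * t * chebU n t - chebU (n + 1) t) := by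
  induction n using Nat.twoStepInduction with
  | zero => simp only [chebU]; ring
  | one => rw [chebU_add_two]; simp only [chebU]; ring
  | more n ih₀ ih₁ =>
    have hn₂ := chebU_add_two n t
    have hn₃ : chebU (n + 2 + 1) t = 2 * t * chebU (n + 2) t - chebU (n + 1) t :=
      chebU_add_two (n + 1) t
    rw [show m + (n + 2) + 1 = m + n + 1 + 2 by ring, chebU_add_two,
      show m + n + 1 + 1 = m + (n + 1) + 1 by ring, ih₀, ih₁, hn₃, hn₂]
    ring

theorem one_sub_mul_Rfun_mul_chebU {x t : ℝ} (hxt : 2 * x * t = 1) (k : ℕ)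
    (hk : ∀ m, m < k → 1 - x ^ 2 * Rfun m (x ^ 2) ≠ 0) :
    (1 - x ^ 2 * Rfun k (x ^ 2)) * chebU k t = x * chebU (k + 1) t := by
  induction k with
  | zero => simp only [Rfun, chebU]; linear_combination -hxt
  | succ k ih =>
    have hk' : 1 - x ^ 2 * Rfun k (x ^ 2) ≠ 0 := hk k k.lt_succ_self
    have ih' := ih fun m hm => hk m (hm.trans k.lt_succ_self)
    rw [Rfun, chebU_add_two]
    field_simp
    linear_combination x * ih' - (1 - x ^ 2 * Rfun k (x ^ 2)) * chebU (k + 1) t * hxt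

/-- For all `p, q ≥ 0`,
`1 − x²·(R_p(x²) + R_q(x²)) = x·U_{p+q+1}(1/(2x)) / (U_p(1/(2x))·U_q(1/(2x)))`,
for every `x` in a domain where all the denominators involved are nonzero. -/
theorem one_sub_sq_mul_R_add_R (p q : ℕ) (x : ℝ) (hx : x ≠ 0)
    (hp : ∀ m, m < p → 1 - x ^ 2 * Rfun m (x ^ 2) ≠ 0)
    (hq : ∀ m, m < q → 1 - x ^ 2 * Rfun m (x ^ 2) ≠ 0)
    (hUp : chebU p (1 / (2 * x)) ≠ 0) (hUq : chebU q (1 / (2 * x)) ≠ 0) :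
    1 - x ^ 2 * (Rfun p (x ^ 2) + Rfun q (x ^ 2)) =
      x * chebU (p + q + 1) (1 / (2 * x)) / (chebU p (1 / (2 * x)) * chebU q (1 / (2 * x))) := by
  have hxt : 2 * x * (1 / (2 * x)) = 1 := by field_simp
  set t := 1 / (2 * x)
  have hRp := one_sub_mul_Rfun_mul_chebU hxt p hp
  have hRq := one_sub_mul_Rfun_mul_chebU hxt q hq
  rw [eq_div_iff (mul_ne_zero hUp hUq), chebU_add_add_one]
  linear_combination chebU q t * hRp + chebU p t * hRq + chebU p t * chebU q t * hxt
end

section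
/- Let π be a permutation of {1,…,n} with π_{j+1}=n (i.e., the maximum n occurs in position j+1, for 0≤j≤n−1). Let β be the subsequence (π_1,…,π_j) and γ the subsequence (π_{j+2},…,π_n), regarded as permutations via order-isomorphism. If π avoids the pattern 132, then every entry of β is greater than every entry of γ, and sign(π) = (−1)^{(j+1)(n−1)}·sign(β)·sign(γ). -/
/-- `π` contains the pattern `τ`: there is a strictly increasing choice of positions
on which `π` is order-isomorphic to `τ`. -/
def HasPatt {n k : ℕ} (π : Equiv.Perm (Fin n)) (τ : Equiv.Perm (Fin k)) : Prop :=
  ∃ f : Fin k → Fin n, StrictMono f ∧ ∀ i j : Fin k, τ i < τ j ↔ π (f i) < π (f j)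

/-- The pattern `132` as a permutation of `Fin 3` (0-indexed values `0, 2, 1`). -/
def patt132 : Equiv.Perm (Fin 3) := Equiv.swap 1 2

/-- The sign of a word `w` with entries in a linear order: `(−1)` to the number of
inversions, i.e. pairs of positions `i < j` with `w j < w i`. -/
def wordSign {m : ℕ} {α : Type*} [LinearOrder α] (w : Fin m → α) : ℤ :=
  (-1) ^ (Finset.univ.filter fun p : Fin m × Fin m => p.1 < p.2 ∧ w p.2 < w p.1).card

section Aux

open Equiv Finset

lemma aux_sign_eq_signAux {n : ℕ} (f : Perm (Fin n)) : Perm.sign f = Perm.signAux f := by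
  refine Equiv.Perm.swap_induction_on f (by simp [Perm.signAux_one]) ?_
  intro f x y hxy ih
  rw [Perm.sign_mul, Perm.signAux_mul, Perm.sign_swap hxy, Perm.signAux_swap hxy, ih]

lemma aux_sign_eq_pow_inversions {n : ℕ} (f : Perm (Fin n)) :
    (Perm.sign f : ℤ) =
      (-1 : ℤ) ^ (Finset.univ.filter fun p : Fin n × Fin n =>
        p.1 < p.2 ∧ f p.2 < f p.1).card := by
  rw [aux_sign_eq_signAux]
  have : ((Perm.signAux f : ℤˣ) : ℤ) =
      ∏ x ∈ Perm.finPairsLT n, (if f x.1 ≤ f x.2 then (-1 : ℤ) else 1) := by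
    rw [Perm.signAux]
    push_cast
    simp [apply_ite]
  rw [this, ← Finset.prod_filter, Finset.prod_const]
  congr 1
  apply Finset.card_nbij' (fun x => (x.2, x.1)) (fun p => ⟨p.2, p.1⟩)
  · intro x hx
    simp only [Finset.mem_coe, Finset.mem_filter, Perm.mem_finPairsLT] at hx ⊢
    refine ⟨Finset.mem_univ _, hx.1, lt_of_le_of_ne hx.2 ?_⟩
    exact fun h => absurd (f.injective h) (ne_of_gt hx.1)
  · intro p hp
    simp only [Finset.mem_coe, Finset.mem_filter, Perm.mem_finPairsLT] at hp ⊢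
    exact ⟨hp.2.1, le_of_lt hp.2.2⟩
  · intro x _; rfl
  · intro p _; rfl

lemma aux_part1 (n : ℕ) (π : Equiv.Perm (Fin n)) (j : Fin n) (hmax : ∀ i : Fin n, π i ≤ π j)
    (havoid : ¬ HasPatt π patt132) :
    ∀ a b : Fin n, a < j → j < b → π b < π a := by
  intro a b haj hjb
  by_contra hab
  push_neg at hab
  have haab : a < b := haj.trans hjb
  have hanb : a ≠ b := ne_of_lt haab
  have hab' : π a < π b := lt_of_le_of_ne hab (fun h => hanb (π.injective h))
  have hbj : π b < π j := lt_of_le_of_ne (hmax b) (fun h => (ne_of_gt hjb) (π.injective h))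
  have haj' : π a < π j := hab'.trans hbj
  apply havoid
  refine ⟨![a, j, b], ?_, ?_⟩
  · intro x y hxy
    fin_cases x <;> fin_cases y <;> simp_all
  · intro x y
    fin_cases x <;> fin_cases y <;>
      simp [patt132, Equiv.swap_apply_def, hab', hbj, haj', lt_irrefl,
        not_lt.2 hab'.le, not_lt.2 hbj.le, not_lt.2 haj'.le]

/-- split a filter cardinality -/
lemma aux_filter_split {α : Type*} [Fintype α] [DecidableEq α]
    (A B : α → Prop) [DecidablePred A] [DecidablePred B] :
    (Finset.univ.filter A).card =
      (Finset.univ.filter fun a => A a ∧ B a).card +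
      (Finset.univ.filter fun a => A a ∧ ¬ B a).card := by
  rw [← Finset.filter_filter, ← Finset.filter_filter]
  exact (Finset.card_filter_add_card_filter_not (s := Finset.univ.filter A) B).symm

lemma aux_pow_neg_one (x y jv d : ℕ) :
    (-1 : ℤ) ^ (x + (d + (jv * d + y))) = (-1 : ℤ) ^ ((jv + 1) * (jv + d) + (x + y)) := by
  obtain ⟨m, hm⟩ : Even (jv * (jv + 1)) := Nat.even_mul_succ_self jv
  have h : (jv + 1) * (jv + d) + (x + y) = x + (d + (jv * d + y)) + 2 * m := by nlinarith [hm]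
  rw [h]
  conv_rhs => rw [pow_add, pow_mul]
  simp

end Aux

/-- Let `π` be a permutation of length `n ≥ 1` whose maximum value occurs at position
`j` (0-indexed).  If `π` avoids `132`, then every entry before position `j` is greater
than every entry after position `j`, and
`sign π = (−1)^{(j+1)(n−1)} · sign β · sign γ`, where `β` is the prefix of `π` of
length `j` and `γ` is the suffix of `π` of length `n − 1 − j` (viewed as permutations
via order-isomorphism, whose signs are computed by counting inversions). -/
theorem sign_of_avoider_with_max (n : ℕ) (hn : 1 ≤ n) (π : Equiv.Perm (Fin n))
    (j : Fin n) (hmax : ∀ i : Fin n, π i ≤ π j)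
    (havoid : ¬ HasPatt π patt132) :
    (∀ a b : Fin n, a < j → j < b → π b < π a) ∧
    (Equiv.Perm.sign π : ℤ) =
      (-1 : ℤ) ^ (((j : ℕ) + 1) * (n - 1)) *
        (wordSign (fun i : Fin (j : ℕ) => π ⟨i, i.isLt.trans j.isLt⟩) *
          wordSign (fun i : Fin (n - 1 - (j : ℕ)) =>
            π ⟨(j : ℕ) + 1 + i, by have h1 := i.isLt; have h2 := j.isLt; omega⟩)) := by
  have key := aux_part1 n π j hmax havoid
  refine ⟨key, ?_⟩
  have hjn : (j : ℕ) < n := j.isLt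
  set jv : ℕ := (j : ℕ) with hjv
  set Cβ : ℕ := (Finset.univ.filter fun p : Fin jv × Fin jv =>
      p.1 < p.2 ∧ π ⟨p.2, p.2.isLt.trans j.isLt⟩ < π ⟨p.1, p.1.isLt.trans j.isLt⟩).card with hCβ
  set Cγ : ℕ := (Finset.univ.filter fun p : Fin (n - 1 - jv) × Fin (n - 1 - jv) =>
      p.1 < p.2 ∧ π ⟨jv + 1 + p.2, by have := p.2.isLt; omega⟩ <
        π ⟨jv + 1 + p.1, by have := p.1.isLt; omega⟩).card with hCγ
  have hsplit1 := aux_filter_split (α := Fin n × Fin n)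
    (fun p => p.1 < p.2 ∧ π p.2 < π p.1) (fun p => p.2 < j)
  have hsplit2 := aux_filter_split (α := Fin n × Fin n)
    (fun p => (p.1 < p.2 ∧ π p.2 < π p.1) ∧ ¬ p.2 < j) (fun p => p.1 = j)
  have hsplit3 := aux_filter_split (α := Fin n × Fin n)
    (fun p => ((p.1 < p.2 ∧ π p.2 < π p.1) ∧ ¬ p.2 < j) ∧ ¬ p.1 = j) (fun p => p.1 < j)
  -- S1 : both coordinates below j
  have hS1 : (Finset.univ.filter fun p : Fin n × Fin n =>
      (p.1 < p.2 ∧ π p.2 < π p.1) ∧ p.2 < j).card = Cβ := by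
    rw [hCβ]
    refine Finset.card_bij'
      (fun p hp =>
        ((⟨(p.1 : ℕ), by
            simp only [Finset.mem_filter, Finset.mem_univ, true_and] at hp
            exact lt_of_le_of_lt (Fin.le_of_lt hp.1.1) hp.2⟩ : Fin jv),
         (⟨(p.2 : ℕ), by
            simp only [Finset.mem_filter, Finset.mem_univ, true_and] at hp
            exact hp.2⟩ : Fin jv)))
      (fun q _ =>
        ((⟨(q.1 : ℕ), q.1.isLt.trans hjn⟩ : Fin n), (⟨(q.2 : ℕ), q.2.isLt.trans hjn⟩ : Fin n)))
      ?_ ?_ ?_ ?_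
    · intro p hp
      simp only [Finset.mem_filter, Finset.mem_univ, true_and] at hp ⊢
      exact ⟨hp.1.1, hp.1.2⟩
    · intro q hq
      simp only [Finset.mem_filter, Finset.mem_univ, true_and] at hq ⊢
      exact ⟨⟨hq.1, hq.2⟩, q.2.isLt⟩
    · intro p hp; rfl
    · intro q hq; rfl
  -- S2 : first coordinate is j
  have hS2 : (Finset.univ.filter fun p : Fin n × Fin n =>
      ((p.1 < p.2 ∧ π p.2 < π p.1) ∧ ¬ p.2 < j) ∧ p.1 = j).card = n - 1 - jv := by
    have h : (Finset.univ.filter fun p : Fin n × Fin n =>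
        ((p.1 < p.2 ∧ π p.2 < π p.1) ∧ ¬ p.2 < j) ∧ p.1 = j).card
        = (Finset.univ : Finset (Fin (n - 1 - jv))).card := by
      refine Finset.card_bij'
        (fun p hp => (⟨(p.2 : ℕ) - (jv + 1), by
            simp only [Finset.mem_filter, Finset.mem_univ, true_and] at hp
            have h1 : j < p.2 := hp.2 ▸ hp.1.1.1
            have h2 := p.2.isLt
            fin_omega⟩ : Fin (n - 1 - jv)))
        (fun q _ => ((j : Fin n), (⟨jv + 1 + (q : ℕ), by have := q.isLt; omega⟩ : Fin n)))
        ?_ ?_ ?_ ?_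
      · intro p hp
        exact Finset.mem_univ _
      · intro q hq
        simp only [Finset.mem_filter, Finset.mem_univ, true_and]
        have hjb : j < (⟨jv + 1 + (q : ℕ), by have := q.isLt; omega⟩ : Fin n) := by
          fin_omega
        have hne : (⟨jv + 1 + (q : ℕ), by have := q.isLt; omega⟩ : Fin n) ≠ j := ne_of_gt hjb
        refine ⟨⟨⟨hjb, ?_⟩, not_lt.2 (le_of_lt hjb)⟩, by trivial⟩
        exact lt_of_le_of_ne (hmax _) (fun h => hne (π.injective h))
      · intro p hp
        simp only [Finset.mem_filter, Finset.mem_univ, true_and] at hp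
        have h1 : j < p.2 := hp.2 ▸ hp.1.1.1
        have h2 := p.2.isLt
        obtain ⟨p1, p2⟩ := p
        simp only [Prod.mk.injEq]
        constructor
        · exact hp.2.symm
        · apply Fin.ext
          simp only at h1 ⊢
          fin_omega
      · intro q hq
        apply Fin.ext
        simp only [Fin.val_mk]
        omega
    rw [h, Finset.card_univ, Fintype.card_fin]
  -- S3 : straddling pairs
  have hS3 : (Finset.univ.filter fun p : Fin n × Fin n =>
      (((p.1 < p.2 ∧ π p.2 < π p.1) ∧ ¬ p.2 < j) ∧ ¬ p.1 = j) ∧ p.1 < j).card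
      = jv * (n - 1 - jv) := by
    have h : (Finset.univ.filter fun p : Fin n × Fin n =>
        (((p.1 < p.2 ∧ π p.2 < π p.1) ∧ ¬ p.2 < j) ∧ ¬ p.1 = j) ∧ p.1 < j).card
        = (Finset.univ : Finset (Fin jv × Fin (n - 1 - jv))).card := by
      refine Finset.card_bij'
        (fun p hp =>
          ((⟨(p.1 : ℕ), by
              simp only [Finset.mem_filter, Finset.mem_univ, true_and] at hp
              exact hp.2⟩ : Fin jv),
           (⟨(p.2 : ℕ) - (jv + 1), by
              simp only [Finset.mem_filter, Finset.mem_univ, true_and] at hp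
              have hge : ¬ p.2 < j := hp.1.1.2
              have hne2 : p.2 ≠ j := fun h =>
                absurd (h ▸ hp.1.1.1.2) (not_lt.2 (hmax p.1))
              have h2 := p.2.isLt
              have hne2' : (p.2 : ℕ) ≠ jv := fun h => hne2 (Fin.ext h)
              fin_omega⟩ : Fin (n - 1 - jv))))
        (fun q _ =>
          ((⟨(q.1 : ℕ), q.1.isLt.trans hjn⟩ : Fin n),
           (⟨jv + 1 + (q.2 : ℕ), by have := q.2.isLt; omega⟩ : Fin n)))
        ?_ ?_ ?_ ?_
      · intro p hp
        exact Finset.mem_univ _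
      · intro q hq
        simp only [Finset.mem_filter, Finset.mem_univ, true_and]
        have ha : (⟨(q.1 : ℕ), q.1.isLt.trans hjn⟩ : Fin n) < j := q.1.isLt
        have hb : j < (⟨jv + 1 + (q.2 : ℕ), by have := q.2.isLt; omega⟩ : Fin n) := by
          fin_omega
        exact ⟨⟨⟨⟨ha.trans hb, key _ _ ha hb⟩, not_lt.2 hb.le⟩, ne_of_lt ha⟩, ha⟩
      · intro p hp
        simp only [Finset.mem_filter, Finset.mem_univ, true_and] at hp
        have hge : ¬ p.2 < j := hp.1.1.2
        have hne2 : p.2 ≠ j := fun h =>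
          absurd (h ▸ hp.1.1.1.2) (not_lt.2 (hmax p.1))
        have hne2' : (p.2 : ℕ) ≠ jv := fun h => hne2 (Fin.ext h)
        have h2 := p.2.isLt
        obtain ⟨p1, p2⟩ := p
        simp only [Prod.mk.injEq]
        constructor
        · first | trivial | exact Fin.ext rfl
        · apply Fin.ext
          simp only at hge hne2' h2 ⊢
          fin_omega
      · intro q hq
        obtain ⟨q1, q2⟩ := q
        simp only [Prod.mk.injEq]
        exact ⟨by first | trivial | exact Fin.ext rfl, Fin.ext (by simp only [Fin.val_mk]; omega)⟩
    rw [h, Finset.card_univ]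
    simp
  -- S4 : both coordinates above j
  have hS4 : (Finset.univ.filter fun p : Fin n × Fin n =>
      (((p.1 < p.2 ∧ π p.2 < π p.1) ∧ ¬ p.2 < j) ∧ ¬ p.1 = j) ∧ ¬ p.1 < j).card = Cγ := by
    rw [hCγ]
    refine Finset.card_bij'
      (fun p hp =>
        ((⟨(p.1 : ℕ) - (jv + 1), by
            simp only [Finset.mem_filter, Finset.mem_univ, true_and] at hp
            have hne : (p.1 : ℕ) ≠ jv := fun h => hp.1.2 (Fin.ext h)
            have hge : ¬ p.1 < j := hp.2
            have h4 : (p.1 : ℕ) < (p.2 : ℕ) := hp.1.1.1.1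
            have h2 := p.2.isLt
            fin_omega⟩ : Fin (n - 1 - jv)),
         (⟨(p.2 : ℕ) - (jv + 1), by
            simp only [Finset.mem_filter, Finset.mem_univ, true_and] at hp
            have hne : (p.1 : ℕ) ≠ jv := fun h => hp.1.2 (Fin.ext h)
            have hge : ¬ p.1 < j := hp.2
            have h4 : (p.1 : ℕ) < (p.2 : ℕ) := hp.1.1.1.1
            have h2 := p.2.isLt
            fin_omega⟩ : Fin (n - 1 - jv))))
      (fun q _ =>
        ((⟨jv + 1 + (q.1 : ℕ), by have := q.1.isLt; omega⟩ : Fin n),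
         (⟨jv + 1 + (q.2 : ℕ), by have := q.2.isLt; omega⟩ : Fin n)))
      ?_ ?_ ?_ ?_
    · intro p hp
      simp only [Finset.mem_filter, Finset.mem_univ, true_and] at hp ⊢
      have hne : (p.1 : ℕ) ≠ jv := fun h => hp.1.2 (Fin.ext h)
      have hge : ¬ p.1 < j := hp.2
      have h4 : (p.1 : ℕ) < (p.2 : ℕ) := hp.1.1.1.1
      have h2 := p.2.isLt
      have h3 : jv < (p.1 : ℕ) := by fin_omega
      constructor
      · fin_omega
      · have e1 : (⟨jv + 1 + ((p.1 : ℕ) - (jv + 1)), by omega⟩ : Fin n) = p.1 :=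
          Fin.ext (by simp only [Fin.val_mk]; omega)
        have e2 : (⟨jv + 1 + ((p.2 : ℕ) - (jv + 1)), by omega⟩ : Fin n) = p.2 :=
          Fin.ext (by simp only [Fin.val_mk]; omega)
        calc π ⟨jv + 1 + ((p.2 : ℕ) - (jv + 1)), by omega⟩ = π p.2 := by rw [e2]
        _ < π p.1 := hp.1.1.1.2
        _ = π ⟨jv + 1 + ((p.1 : ℕ) - (jv + 1)), by omega⟩ := by rw [e1]
    · intro q hq
      simp only [Finset.mem_filter, Finset.mem_univ, true_and] at hq ⊢
      have hq1 : (q.1 : ℕ) < (q.2 : ℕ) := hq.1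
      have hb1 : j < (⟨jv + 1 + (q.1 : ℕ), by have := q.1.isLt; omega⟩ : Fin n) := by
        fin_omega
      refine ⟨⟨⟨⟨?_, hq.2⟩, ?_⟩, ?_⟩, ?_⟩
      · fin_omega
      · fin_omega
      · exact ne_of_gt hb1
      · exact not_lt.2 (le_of_lt hb1)
    · intro p hp
      simp only [Finset.mem_filter, Finset.mem_univ, true_and] at hp
      have hne : (p.1 : ℕ) ≠ jv := fun h => hp.1.2 (Fin.ext h)
      have hge : ¬ p.1 < j := hp.2
      have h4 : (p.1 : ℕ) < (p.2 : ℕ) := hp.1.1.1.1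
      have h2 := p.2.isLt
      have h3 : jv < (p.1 : ℕ) := by fin_omega
      refine Prod.ext (Fin.ext ?_) (Fin.ext ?_)
      · show jv + 1 + ((p.1 : ℕ) - (jv + 1)) = (p.1 : ℕ)
        omega
      · show jv + 1 + ((p.2 : ℕ) - (jv + 1)) = (p.2 : ℕ)
        omega
    · intro q hq
      refine Prod.ext (Fin.ext ?_) (Fin.ext ?_)
      · show jv + 1 + (q.1 : ℕ) - (jv + 1) = (q.1 : ℕ)
        omega
      · show jv + 1 + (q.2 : ℕ) - (jv + 1) = (q.2 : ℕ)
        omega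
  -- put the pieces together
  have htotal : (Finset.univ.filter fun p : Fin n × Fin n =>
      p.1 < p.2 ∧ π p.2 < π p.1).card
      = Cβ + ((n - 1 - jv) + (jv * (n - 1 - jv) + Cγ)) := by
    rw [hsplit1, hS1, hsplit2, hS2, hsplit3, hS3, hS4]
  have hwβ : wordSign (fun i : Fin (j : ℕ) => π ⟨i, i.isLt.trans j.isLt⟩)
      = (-1 : ℤ) ^ Cβ := rfl
  have hwγ : wordSign (fun i : Fin (n - 1 - (j : ℕ)) =>
      π ⟨(j : ℕ) + 1 + i, by have h1 := i.isLt; have h2 := j.isLt; omega⟩)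
      = (-1 : ℤ) ^ Cγ := rfl
  rw [aux_sign_eq_pow_inversions, htotal, hwβ, hwγ, ← pow_add, ← pow_add]
  have harith := aux_pow_neg_one Cβ Cγ jv (n - 1 - jv)
  rw [(by omega : jv + (n - 1 - jv) = n - 1)] at harith
  exact harith
end

section
/- For n≥1, the number of even 132-avoiding permutations of length 2n−1 equals (C_{2n−1}+C_{n−1})/2, and the number of odd 132-avoiding permutations of length 2n−1 equals (C_{2n−1}−C_{n−1})/2, where C_m is the m-th Catalan number. -/
open Equiv Equiv.Perm Finset

lemma patt0 : patt132 0 = 0 := by decide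
lemma patt1 : patt132 1 = 2 := by decide
lemma patt2 : patt132 2 = 1 := by decide

lemma pattVal : ∀ i : Fin 3, (patt132 i).val = if i.val = 0 then 0 else if i.val = 1 then 2 else 1 := by decide

lemma hasPatt132_iff {n : ℕ} (π : Perm (Fin n)) :
    HasPatt π patt132 ↔ ∃ x y z : Fin n, x < y ∧ y < z ∧ π x < π z ∧ π z < π y := by
  constructor
  · rintro ⟨f, hf, hiff⟩
    refine ⟨f 0, f 1, f 2, hf (by decide), hf (by decide), ?_, ?_⟩
    · exact (hiff 0 2).1 (by rw [patt0, patt2]; decide)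
    · exact (hiff 2 1).1 (by rw [patt2, patt1]; decide)
  · rintro ⟨x, y, z, hxy, hyz, h1, h2⟩
    refine ⟨fun i => if i.val = 0 then x else if i.val = 1 then y else z, ?_, ?_⟩
    · intro i j hij
      have hi := i.isLt; have hj := j.isLt
      have hij' : i.val < j.val := hij
      simp only [Fin.lt_def] at h1 h2 hxy hyz ⊢
      split_ifs <;> omega
    · intro i j
      have hi := i.isLt; have hj := j.isLt
      simp only [Fin.lt_def, pattVal]
      split_ifs <;> simp only [Fin.lt_def] at h1 h2 hxy hyz <;> omega
open Equiv Equiv.Perm Finset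

-- rotation power lemma
open Fin.NatCast Fin.CommRing in
lemma finRotate_pow_apply (m k : ℕ) (x : Fin (m + 1)) :
    ((finRotate (m + 1)) ^ k) x = x + (k : Fin (m + 1)) := by
  induction k generalizing x with
  | zero => simp
  | succ k ih =>
    rw [pow_succ, Perm.mul_apply, finRotate_succ_apply, ih]
    push_cast
    ring

def rhoPerm (a b : ℕ) : Perm (Fin (a + b + 1)) := (finRotate (a + b + 1)) ^ b

open Fin.NatCast in
lemma rhoPerm_val (a b : ℕ) (x : Fin (a + b + 1)) :
    ((rhoPerm a b) x).val = if x.val ≤ a then x.val + b else x.val - (a + 1) := by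
  have hx := x.isLt
  have : ((rhoPerm a b) x) = x + (b : Fin (a + b + 1)) := finRotate_pow_apply (a + b) b x
  rw [this, Fin.val_add]
  have hb : ((b : Fin (a + b + 1)) : ℕ) = b := by
    rw [Fin.val_natCast]; exact Nat.mod_eq_of_lt (by omega)
  rw [hb]
  rcases le_or_gt x.val a with h | h
  · rw [if_pos h, Nat.mod_eq_of_lt (by omega)]
  · rw [if_neg (by omega)]
    rw [Nat.mod_eq_sub_mod (by omega), Nat.mod_eq_of_lt (by omega)]
    omega

def sigma1 (a : ℕ) (σ : Perm (Fin a)) : Perm (Fin (a + 1)) :=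
  (Equiv.permCongr finSumFinEquiv) (Equiv.sumCongr σ (Equiv.refl (Fin 1)))

lemma sigma1_lt (a : ℕ) (σ : Perm (Fin a)) (x : Fin (a + 1)) (hx : x.val < a) :
    sigma1 a σ x = ⟨(σ ⟨x.val, hx⟩).val, by have := (σ ⟨x.val, hx⟩).isLt; omega⟩ := by
  have h1 : finSumFinEquiv.symm x = Sum.inl (⟨x.val, hx⟩ : Fin a) := by
    rw [Equiv.symm_apply_eq, finSumFinEquiv_apply_left]
    ext; simp
  simp [sigma1, Equiv.permCongr_apply, h1, finSumFinEquiv_apply_left]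
  ext; simp

lemma sigma1_last (a : ℕ) (σ : Perm (Fin a)) :
    sigma1 a σ ⟨a, Nat.lt_succ_self a⟩ = ⟨a, Nat.lt_succ_self a⟩ := by
  have h1 : finSumFinEquiv.symm (⟨a, Nat.lt_succ_self a⟩ : Fin (a + 1)) = Sum.inr (0 : Fin 1) := by
    rw [Equiv.symm_apply_eq, finSumFinEquiv_apply_right]
    ext; simp
  simp [sigma1, Equiv.permCongr_apply, h1, finSumFinEquiv_apply_right]
  ext; simp

lemma sign_sigma1 (a : ℕ) (σ : Perm (Fin a)) : Perm.sign (sigma1 a σ) = Perm.sign σ := by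
  rw [sigma1, sign_permCongr, sign_sumCongr]
  simp

def Lperm (a b : ℕ) (σ : Perm (Fin a)) (τ : Perm (Fin b)) : Perm (Fin (a + b + 1)) :=
  (Equiv.permCongr (finSumFinEquiv.trans (finCongr (by omega : (a + 1) + b = a + b + 1))))
    (Equiv.sumCongr (sigma1 a σ) τ)

lemma sign_Lperm (a b : ℕ) (σ : Perm (Fin a)) (τ : Perm (Fin b)) :
    Perm.sign (Lperm a b σ τ) = Perm.sign σ * Perm.sign τ := by
  rw [Lperm, sign_permCongr, sign_sumCongr, sign_sigma1]

lemma Lperm_left (a b : ℕ) (σ : Perm (Fin a)) (τ : Perm (Fin b)) (x : Fin (a + b + 1))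
    (hx : x.val < a) :
    Lperm a b σ τ x = ⟨(σ ⟨x.val, hx⟩).val, by have := (σ ⟨x.val, hx⟩).isLt; omega⟩ := by
  set e := finSumFinEquiv.trans (finCongr (by omega : (a + 1) + b = a + b + 1)) with he
  have h1 : e.symm x = Sum.inl (⟨x.val, by omega⟩ : Fin (a + 1)) := by
    rw [Equiv.symm_apply_eq, he]
    simp only [Equiv.trans_apply, finSumFinEquiv_apply_left]
    ext; simp
  rw [Lperm, Equiv.permCongr_apply, ← he, h1]
  simp only [Equiv.sumCongr_apply, Sum.map_inl, he, Equiv.trans_apply, finSumFinEquiv_apply_left]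
  rw [sigma1_lt a σ _ hx]
  ext; simp

lemma Lperm_mid (a b : ℕ) (σ : Perm (Fin a)) (τ : Perm (Fin b)) (x : Fin (a + b + 1))
    (hx : x.val = a) :
    Lperm a b σ τ x = x := by
  set e := finSumFinEquiv.trans (finCongr (by omega : (a + 1) + b = a + b + 1)) with he
  have h1 : e.symm x = Sum.inl (⟨a, Nat.lt_succ_self a⟩ : Fin (a + 1)) := by
    rw [Equiv.symm_apply_eq, he]
    simp only [Equiv.trans_apply, finSumFinEquiv_apply_left]
    ext; simp [hx]
  rw [Lperm, Equiv.permCongr_apply, ← he, h1]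
  simp only [Equiv.sumCongr_apply, Sum.map_inl, he, Equiv.trans_apply, finSumFinEquiv_apply_left]
  rw [sigma1_last a σ]
  ext; simp [hx]

lemma Lperm_right (a b : ℕ) (σ : Perm (Fin a)) (τ : Perm (Fin b)) (x : Fin (a + b + 1))
    (hx : a < x.val) :
    Lperm a b σ τ x = ⟨a + 1 + (τ ⟨x.val - (a + 1), by have := x.isLt; omega⟩).val,
      by have := (τ ⟨x.val - (a + 1), by have := x.isLt; omega⟩).isLt; omega⟩ := by
  set e := finSumFinEquiv.trans (finCongr (by omega : (a + 1) + b = a + b + 1)) with he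
  have h1 : e.symm x = Sum.inr (⟨x.val - (a + 1), by have := x.isLt; omega⟩ : Fin b) := by
    rw [Equiv.symm_apply_eq, he]
    simp only [Equiv.trans_apply, finSumFinEquiv_apply_right]
    ext; simp; omega
  rw [Lperm, Equiv.permCongr_apply, ← he, h1]
  simp only [Equiv.sumCongr_apply, Sum.map_inr, he, Equiv.trans_apply, finSumFinEquiv_apply_right]
  ext; simp [Nat.add_comm]

lemma sign_rhoPerm (a b : ℕ) : Perm.sign (rhoPerm a b) = (-1) ^ ((a + 1) * b) := by
  have h : Perm.sign (rhoPerm a b) = ((-1 : ℤˣ) ^ (a + b)) ^ b := by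
    rw [rhoPerm, map_pow, sign_finRotate, Nat.add_sub_cancel]
  rw [h, ← pow_mul]
  have hmod : ∀ m k : ℕ, m % 2 = k % 2 → ((-1 : ℤˣ)) ^ m = (-1) ^ k := by
    intro m k hmk
    conv_lhs => rw [← Nat.div_add_mod m 2, pow_add, pow_mul]
    conv_rhs => rw [← Nat.div_add_mod k 2, pow_add, pow_mul]
    simp [hmk]
  apply hmod
  rcases Nat.mod_two_eq_zero_or_one a with ha | ha <;>
    rcases Nat.mod_two_eq_zero_or_one b with hb | hb <;>
      rw [Nat.mul_mod, Nat.mul_mod (a + 1) b, Nat.add_mod a b, Nat.add_mod a 1, ha, hb] <;> norm_num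

def blockPerm (a b : ℕ) (σ : Perm (Fin a)) (τ : Perm (Fin b)) : Perm (Fin (a + b + 1)) :=
  rhoPerm a b * Lperm a b σ τ

lemma sign_blockPerm (a b : ℕ) (σ : Perm (Fin a)) (τ : Perm (Fin b)) :
    Perm.sign (blockPerm a b σ τ) = (-1) ^ ((a + 1) * b) * Perm.sign σ * Perm.sign τ := by
  rw [blockPerm, map_mul, sign_rhoPerm, sign_Lperm, mul_assoc]

lemma blockPerm_left (a b : ℕ) (σ : Perm (Fin a)) (τ : Perm (Fin b)) (x : Fin (a + b + 1))
    (hx : x.val < a) :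
    ((blockPerm a b σ τ) x).val = (σ ⟨x.val, hx⟩).val + b := by
  rw [blockPerm, Perm.mul_apply, Lperm_left a b σ τ x hx, rhoPerm_val]
  have := (σ ⟨x.val, hx⟩).isLt
  rw [if_pos (by simpa using by omega)]

lemma blockPerm_mid (a b : ℕ) (σ : Perm (Fin a)) (τ : Perm (Fin b)) (x : Fin (a + b + 1))
    (hx : x.val = a) :
    ((blockPerm a b σ τ) x).val = a + b := by
  rw [blockPerm, Perm.mul_apply, Lperm_mid a b σ τ x hx, rhoPerm_val]
  rw [if_pos (by omega)]
  omega

lemma blockPerm_right (a b : ℕ) (σ : Perm (Fin a)) (τ : Perm (Fin b)) (x : Fin (a + b + 1))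
    (hx : a < x.val) :
    ((blockPerm a b σ τ) x).val
      = (τ ⟨x.val - (a + 1), by have := x.isLt; omega⟩).val := by
  rw [blockPerm, Perm.mul_apply, Lperm_right a b σ τ x hx, rhoPerm_val]
  rw [if_neg (by simp; omega)]
  simp

lemma blockPerm_inj (a b : ℕ) (σ σ' : Perm (Fin a)) (τ τ' : Perm (Fin b))
    (h : blockPerm a b σ τ = blockPerm a b σ' τ') : σ = σ' ∧ τ = τ' := by
  constructor
  · ext p
    have hp : (p : ℕ) < a := p.isLt
    have hx : ((⟨p.val, by omega⟩ : Fin (a + b + 1))).val < a := hp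
    have := congrArg (fun π : Perm (Fin (a+b+1)) => (π ⟨p.val, by omega⟩).val) h
    rw [blockPerm_left a b σ τ _ hx, blockPerm_left a b σ' τ' _ hx] at this
    have e1 : (⟨((⟨p.val, by omega⟩ : Fin (a + b + 1))).val, hx⟩ : Fin a) = p := Fin.ext rfl
    rw [e1] at this
    omega
  · ext q
    have hq : (q : ℕ) < b := q.isLt
    have hx : a < ((⟨a + 1 + q.val, by omega⟩ : Fin (a + b + 1))).val := by simp; omega
    have := congrArg (fun π : Perm (Fin (a+b+1)) => (π ⟨a + 1 + q.val, by omega⟩).val) h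
    rw [blockPerm_right a b σ τ _ hx, blockPerm_right a b σ' τ' _ hx] at this
    have h2 : (⟨a + 1 + q.val - (a+1), by omega⟩ : Fin b) = q := Fin.ext (by simp)
    rw [h2] at this
    exact this

lemma hasPatt_blockPerm_iff (a b : ℕ) (σ : Perm (Fin a)) (τ : Perm (Fin b)) :
    HasPatt (blockPerm a b σ τ) patt132 ↔ HasPatt σ patt132 ∨ HasPatt τ patt132 := by
  rw [hasPatt132_iff, hasPatt132_iff, hasPatt132_iff]
  constructor
  · rintro ⟨x, y, z, hxy, hyz, h1, h2⟩
    rw [Fin.lt_def] at hxy hyz h1 h2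
    rcases lt_trichotomy y.val a with hy | hy | hy
    · -- y in left block
      have hx : x.val < a := by omega
      rcases lt_trichotomy z.val a with hz | hz | hz
      · left
        rw [blockPerm_left a b σ τ x hx, blockPerm_left a b σ τ z hz] at h1
        rw [blockPerm_left a b σ τ z hz, blockPerm_left a b σ τ y hy] at h2
        exact ⟨⟨x.val, hx⟩, ⟨y.val, hy⟩, ⟨z.val, hz⟩, Fin.mk_lt_mk.2 (by omega),
          Fin.mk_lt_mk.2 (by omega), Fin.lt_def.2 (by omega), Fin.lt_def.2 (by omega)⟩
      · exfalso
        rw [blockPerm_left a b σ τ y hy, blockPerm_mid a b σ τ z hz] at h2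
        have := (σ ⟨y.val, hy⟩).isLt
        omega
      · exfalso
        rw [blockPerm_left a b σ τ x hx, blockPerm_right a b σ τ z hz] at h1
        have := (τ ⟨z.val - (a + 1), by have := z.isLt; omega⟩).isLt
        omega
    · -- y is the max position
      exfalso
      have hx : x.val < a := by omega
      have hz : a < z.val := by omega
      rw [blockPerm_left a b σ τ x hx, blockPerm_right a b σ τ z hz] at h1
      have := (τ ⟨z.val - (a + 1), by have := z.isLt; omega⟩).isLt
      omega
    · -- y in right block
      have hz : a < z.val := by omega
      rcases lt_trichotomy x.val a with hx | hx | hx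
      · exfalso
        rw [blockPerm_left a b σ τ x hx, blockPerm_right a b σ τ z hz] at h1
        have := (τ ⟨z.val - (a + 1), by have := z.isLt; omega⟩).isLt
        omega
      · exfalso
        rw [blockPerm_mid a b σ τ x hx, blockPerm_right a b σ τ z hz] at h1
        have := (τ ⟨z.val - (a + 1), by have := z.isLt; omega⟩).isLt
        omega
      · right
        have hzb := z.isLt; have hyb := y.isLt; have hxb := x.isLt
        rw [blockPerm_right a b σ τ x hx, blockPerm_right a b σ τ z hz] at h1
        rw [blockPerm_right a b σ τ z hz, blockPerm_right a b σ τ y hy] at h2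
        exact ⟨⟨x.val - (a + 1), by omega⟩, ⟨y.val - (a + 1), by omega⟩,
          ⟨z.val - (a + 1), by omega⟩, Fin.mk_lt_mk.2 (by omega), Fin.mk_lt_mk.2 (by omega),
          Fin.lt_def.2 (by omega), Fin.lt_def.2 (by omega)⟩
  · have keyL : ∀ w : Fin a, ((blockPerm a b σ τ) ⟨w.val, by omega⟩).val = (σ w).val + b := by
      intro w
      rw [blockPerm_left a b σ τ _ (show ((⟨w.val, by omega⟩ : Fin (a+b+1))).val < a from w.isLt)]
    have keyR : ∀ w : Fin b,
        ((blockPerm a b σ τ) ⟨a + 1 + w.val, by omega⟩).val = (τ w).val := by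
      intro w
      rw [blockPerm_right a b σ τ _ (show a < ((⟨a + 1 + w.val, by omega⟩ : Fin (a+b+1))).val
        from by show a < a + 1 + w.val; omega)]
      exact congrArg (fun t => (τ t).val)
        (Fin.ext (show a + 1 + w.val - (a + 1) = w.val by omega))
    rintro (⟨x, y, z, hxy, hyz, h1, h2⟩ | ⟨x, y, z, hxy, hyz, h1, h2⟩)
    · rw [Fin.lt_def] at hxy hyz h1 h2
      have hx := x.isLt; have hy := y.isLt; have hz := z.isLt
      refine ⟨⟨x.val, by omega⟩, ⟨y.val, by omega⟩, ⟨z.val, by omega⟩,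
        Fin.mk_lt_mk.2 (by omega), Fin.mk_lt_mk.2 (by omega), ?_, ?_⟩ <;> rw [Fin.lt_def] <;>
        simp only [keyL] <;> omega
    · rw [Fin.lt_def] at hxy hyz h1 h2
      have hx := x.isLt; have hy := y.isLt; have hz := z.isLt
      refine ⟨⟨a + 1 + x.val, by omega⟩, ⟨a + 1 + y.val, by omega⟩, ⟨a + 1 + z.val, by omega⟩,
        Fin.mk_lt_mk.2 (by omega), Fin.mk_lt_mk.2 (by omega), ?_, ?_⟩ <;> rw [Fin.lt_def] <;>
        simp only [keyR] <;> omega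

def permCast {k l : ℕ} (h : k = l) (π : Perm (Fin k)) : Perm (Fin l) :=
  (Equiv.permCongr (finCongr h)) π

lemma permCast_rfl {k : ℕ} (π : Perm (Fin k)) : permCast rfl π = π := by
  ext x; simp [permCast]

lemma sign_permCast {k l : ℕ} (h : k = l) (π : Perm (Fin k)) :
    Perm.sign (permCast h π) = Perm.sign π := by
  subst h; rw [permCast_rfl]

lemma hasPatt_permCast {k l : ℕ} (h : k = l) (π : Perm (Fin k)) :
    HasPatt (permCast h π) patt132 ↔ HasPatt π patt132 := by
  subst h; rw [permCast_rfl]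

lemma permCast_inj {k l : ℕ} (h : k = l) (π π' : Perm (Fin k))
    (he : permCast h π = permCast h π') : π = π' := by
  subst h; rwa [permCast_rfl, permCast_rfl] at he

lemma permCast_apply_val {k l : ℕ} (h : k = l) (π : Perm (Fin k)) (x : Fin l) :
    ((permCast h π) x).val = (π ⟨x.val, by omega⟩).val := by
  subst h; rw [permCast_rfl]

set_option maxHeartbeats 1000000 in
lemma blockPerm_surj (m : ℕ) (π : Perm (Fin (m + 1))) (hav : ¬ HasPatt π patt132)
    (a : ℕ) (ha : a ≤ m) (hmax : π ⟨a, by omega⟩ = Fin.last m) :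
    ∃ (σ : Perm (Fin a)) (τ : Perm (Fin (m - a))),
      permCast (by omega) (blockPerm a (m - a) σ τ) = π := by
  set b := m - a with hb
  -- cross inequality
  have cross : ∀ p q : Fin (m + 1), p.val < a → a < q.val → (π q).val < (π p).val := by
    intro p q hp hq
    by_contra hc
    push_neg at hc
    have hne : (π p).val ≠ (π q).val := by
      intro e
      have : p = q := π.injective (Fin.ext e)
      omega
    have h1 : (π p).val < (π q).val := by omega
    have h2 : (π q).val < m := by
      have hqa : q ≠ ⟨a, by omega⟩ := by
        intro e; rw [e] at hq; simp at hq
      have : π q ≠ Fin.last m := by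
        intro e; exact hqa (π.injective (e.trans hmax.symm))
      have h3 : (π q).val ≠ m := fun e => this (Fin.ext (by simpa using e))
      have := (π q).isLt
      omega
    apply hav
    rw [hasPatt132_iff]
    refine ⟨p, ⟨a, by omega⟩, q, Fin.lt_def.2 hp, Fin.lt_def.2 hq, Fin.lt_def.2 h1,
      Fin.lt_def.2 ?_⟩
    rw [hmax]
    simpa using h2
  -- lower bound on left block values
  have lower : ∀ p : Fin (m + 1), p.val < a → b ≤ (π p).val := by
    intro p hp
    have himg : (Finset.Ioi (⟨a, by omega⟩ : Fin (m + 1))).image π ⊆ Finset.Iio (π p) := by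
      intro v hv
      rw [Finset.mem_image] at hv
      obtain ⟨q, hq, rfl⟩ := hv
      rw [Finset.mem_Ioi] at hq
      rw [Finset.mem_Iio]
      exact Fin.lt_def.2 (cross p q hp (Fin.lt_def.1 hq))
    have hcard := Finset.card_le_card himg
    rw [Finset.card_image_of_injective _ π.injective, Fin.card_Ioi, Fin.card_Iio] at hcard
    simp only [show ((⟨a, by omega⟩ : Fin (m + 1))).val = a from rfl] at hcard
    omega
  -- upper bound on right block values
  have upper : ∀ q : Fin (m + 1), a < q.val → (π q).val < b := by
    intro q hq
    have himg : (Finset.Iic (⟨a, by omega⟩ : Fin (m + 1))).image π ⊆ Finset.Ioi (π q) := by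
      intro v hv
      rw [Finset.mem_image] at hv
      obtain ⟨p, hp, rfl⟩ := hv
      rw [Finset.mem_Iic] at hp
      rw [Finset.mem_Ioi]
      have hple : p.val ≤ a := hp
      rcases Nat.lt_or_ge p.val a with hpa | hpa
      · exact Fin.lt_def.2 (cross p q hpa hq)
      · have : p = ⟨a, by omega⟩ := Fin.ext (by show p.val = a; omega)
        rw [this, hmax]
        have hqa : q ≠ ⟨a, by omega⟩ := by
          intro e; rw [e] at hq; simp at hq
        have : π q ≠ Fin.last m := by
          intro e; exact hqa (π.injective (e.trans hmax.symm))
        have h3 : (π q).val ≠ m := fun e => this (Fin.ext (by simpa using e))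
        have := (π q).isLt
        have h4 : (π q).val < m := by omega
        exact Fin.lt_def.2 (by rw [Fin.val_last]; exact h4)
    have hcard := Finset.card_le_card himg
    rw [Finset.card_image_of_injective _ π.injective, Fin.card_Iic, Fin.card_Ioi] at hcard
    simp only [show ((⟨a, by omega⟩ : Fin (m + 1))).val = a from rfl] at hcard
    have := (π q).isLt
    omega
  -- value at the max position
  have hlastval : (π ⟨a, by omega⟩).val = m := by rw [hmax]; rfl
  -- the left factor
  have fbound : ∀ p : Fin a, (π ⟨p.val, by omega⟩).val - b < a := by
    intro p
    have h1 := lower ⟨p.val, by omega⟩ p.isLt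
    have hne : (π ⟨p.val, by omega⟩).val ≠ m := by
      intro e
      have : (⟨p.val, by omega⟩ : Fin (m + 1)) = ⟨a, by omega⟩ :=
        π.injective (Fin.ext (e.trans hlastval.symm))
      have := congrArg Fin.val this
      simp only at this
      omega
    have := (π ⟨p.val, by omega⟩).isLt
    have hpa := p.isLt
    omega
  let f : Fin a → Fin a := fun p => ⟨(π ⟨p.val, by omega⟩).val - b, fbound p⟩
  have finj : Function.Injective f := by
    intro p p' he
    have h1 := lower ⟨p.val, by omega⟩ p.isLt
    have h2 := lower ⟨p'.val, by omega⟩ p'.isLt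
    have hv : (f p).val = (f p').val := congrArg Fin.val he
    simp only [f] at hv
    have : (π ⟨p.val, by omega⟩).val = (π ⟨p'.val, by omega⟩).val := by omega
    have := π.injective (Fin.ext this)
    have := congrArg Fin.val this
    simp only at this
    exact Fin.ext this
  let σ : Perm (Fin a) := Equiv.ofBijective f ((Finite.injective_iff_bijective).1 finj)
  -- the right factor
  let g : Fin b → Fin b := fun q =>
    ⟨(π ⟨a + 1 + q.val, by have := q.isLt; omega⟩).val,
      upper _ (by show a < a + 1 + q.val; omega)⟩
  have ginj : Function.Injective g := by
    intro q q' he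
    have hv : (g q).val = (g q').val := congrArg Fin.val he
    simp only [g] at hv
    have := π.injective (Fin.ext hv)
    have := congrArg Fin.val this
    simp only at this
    exact Fin.ext (by omega)
  let τ : Perm (Fin b) := Equiv.ofBijective g ((Finite.injective_iff_bijective).1 ginj)
  refine ⟨σ, τ, ?_⟩
  apply Equiv.ext
  intro x
  apply Fin.ext
  rw [permCast_apply_val]
  rcases lt_trichotomy x.val a with hx | hx | hx
  · rw [blockPerm_left a b σ τ _ (show ((⟨x.val, by omega⟩ : Fin (a + b + 1))).val < a from hx)]
    have : σ ⟨x.val, hx⟩ = f ⟨x.val, hx⟩ := rfl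
    rw [this]
    simp only [f]
    have h1 := lower ⟨x.val, by omega⟩ hx
    have h2 : (⟨x.val, by omega⟩ : Fin (m + 1)) = x := Fin.ext rfl
    rw [h2] at h1 ⊢
    have := lower x hx
    omega
  · rw [blockPerm_mid a b σ τ _ (show ((⟨x.val, by omega⟩ : Fin (a + b + 1))).val = a from hx)]
    have h2 : x = ⟨a, by omega⟩ := Fin.ext hx
    rw [h2, hlastval]
    omega
  · rw [blockPerm_right a b σ τ _ (show a < ((⟨x.val, by omega⟩ : Fin (a + b + 1))).val from hx)]
    have hxm := x.isLt
    have : τ ⟨x.val - (a + 1), by omega⟩ = g ⟨x.val - (a + 1), by omega⟩ := rfl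
    rw [this]
    simp only [g]
    have h2 : (⟨a + 1 + (x.val - (a + 1)), by omega⟩ : Fin (m + 1)) = x :=
      Fin.ext (by show a + 1 + (x.val - (a + 1)) = x.val; omega)
    rw [h2]

open scoped Classical

noncomputable def cAv (m : ℕ) : ℕ := Nat.card {π : Perm (Fin m) // ¬ HasPatt π patt132}

noncomputable def sAv (m : ℕ) : ℤ :=
  ∑ π : {π : Perm (Fin m) // ¬ HasPatt π patt132}, (Perm.sign π.1 : ℤ)

def Phi (n : ℕ)
    (x : Σ a : Fin (n + 1), {σ : Perm (Fin a.val) // ¬ HasPatt σ patt132} ×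
      {τ : Perm (Fin (n - a.val)) // ¬ HasPatt τ patt132}) :
    {π : Perm (Fin (n + 1)) // ¬ HasPatt π patt132} :=
  ⟨permCast (by have := x.1.isLt; omega)
      (blockPerm x.1.val (n - x.1.val) x.2.1.1 x.2.2.1), by
    rw [hasPatt_permCast, hasPatt_blockPerm_iff]
    rintro (h | h)
    · exact x.2.1.2 h
    · exact x.2.2.2 h⟩

lemma Phi_max (n : ℕ) (a : Fin (n+1)) (σ) (τ) :
    ((Phi n ⟨a, σ, τ⟩).1 ⟨a.val, a.isLt⟩).val = n := by
  show ((permCast _ (blockPerm a.val (n - a.val) σ.1 τ.1)) _).val = n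
  rw [permCast_apply_val]
  rw [blockPerm_mid _ _ _ _ _ rfl]
  have := a.isLt
  omega

lemma Phi_bijective (n : ℕ) : Function.Bijective (Phi n) := by
  constructor
  · rintro ⟨a, σ, τ⟩ ⟨a', σ', τ'⟩ h
    have hmax1 := Phi_max n a σ τ
    have hmax2 := Phi_max n a' σ' τ'
    rw [h] at hmax1
    have hperm := congrArg Subtype.val h
    have haa : a = a' := by
      have h1 : ((Phi n ⟨a', σ', τ'⟩).1 ⟨a.val, a.isLt⟩).val
          = ((Phi n ⟨a', σ', τ'⟩).1 ⟨a'.val, a'.isLt⟩).val := by omega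
      have := (Phi n ⟨a', σ', τ'⟩).1.injective (Fin.ext h1)
      have := congrArg Fin.val this
      simp only at this
      exact Fin.ext this
    subst haa
    have hb : blockPerm a.val (n - a.val) σ.1 τ.1 = blockPerm a.val (n - a.val) σ'.1 τ'.1 :=
      permCast_inj _ _ _ hperm
    obtain ⟨hσ, hτ⟩ := blockPerm_inj _ _ _ _ _ _ hb
    have hpair : (σ, τ) = (σ', τ') := by
      rw [Prod.ext_iff]; exact ⟨Subtype.ext hσ, Subtype.ext hτ⟩
    exact congrArg (Sigma.mk a) hpair
  · rintro ⟨π, hπ⟩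
    set A := π.symm (Fin.last n) with hA
    have ha : A.val ≤ n := by have := A.isLt; omega
    have hmax : π ⟨A.val, by omega⟩ = Fin.last n := by
      have : (⟨A.val, by omega⟩ : Fin (n + 1)) = A := Fin.ext rfl
      rw [this, hA]
      exact π.apply_symm_apply _
    obtain ⟨σ, τ, hst⟩ := blockPerm_surj n π hπ A.val ha hmax
    have hσav : ¬ HasPatt σ patt132 := by
      intro hc
      apply hπ
      rw [← hst, hasPatt_permCast, hasPatt_blockPerm_iff]
      exact Or.inl hc
    have hτav : ¬ HasPatt τ patt132 := by
      intro hc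
      apply hπ
      rw [← hst, hasPatt_permCast, hasPatt_blockPerm_iff]
      exact Or.inr hc
    exact ⟨⟨⟨A.val, A.isLt⟩, ⟨σ, hσav⟩, ⟨τ, hτav⟩⟩, Subtype.ext hst⟩

lemma cAv_succ (n : ℕ) : cAv (n + 1) = ∑ a : Fin (n + 1), cAv a.val * cAv (n - a.val) := by
  have := Nat.card_congr (Equiv.ofBijective (Phi n) (Phi_bijective n)).symm
  rw [cAv, this, Nat.card_eq_fintype_card, Fintype.card_sigma]
  congr 1
  ext a
  rw [← Nat.card_eq_fintype_card, Nat.card_prod, cAv, cAv]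

lemma sAv_succ (n : ℕ) : sAv (n + 1)
    = ∑ a : Fin (n + 1), (-1) ^ ((a.val + 1) * (n - a.val)) * (sAv a.val * sAv (n - a.val)) := by
  rw [sAv, ← Equiv.sum_comp (Equiv.ofBijective (Phi n) (Phi_bijective n))
    (fun π => ((Perm.sign π.1 : ℤˣ) : ℤ))]
  rw [← Finset.univ_sigma_univ, Finset.sum_sigma]
  congr 1
  ext a
  rw [Fintype.sum_prod_type]
  have hterm : ∀ (σ : {σ : Perm (Fin a.val) // ¬ HasPatt σ patt132})
      (τ : {τ : Perm (Fin (n - a.val)) // ¬ HasPatt τ patt132}),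
      ((Perm.sign ((Equiv.ofBijective (Phi n) (Phi_bijective n)) ⟨a, σ, τ⟩).1 : ℤˣ) : ℤ)
        = (-1) ^ ((a.val + 1) * (n - a.val)) * ((Perm.sign σ.1 : ℤ) * (Perm.sign τ.1 : ℤ)) := by
    intro σ τ
    have : ((Equiv.ofBijective (Phi n) (Phi_bijective n)) ⟨a, σ, τ⟩).1
        = permCast (by have := a.isLt; omega)
          (blockPerm a.val (n - a.val) σ.1 τ.1) := rfl
    rw [this, sign_permCast, sign_blockPerm]
    push_cast
    ring
  rw [Finset.sum_congr rfl (fun σ _ => Finset.sum_congr rfl (fun τ _ => hterm σ τ))]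
  simp_rw [← Finset.mul_sum]
  rw [sAv, sAv, Finset.sum_mul_sum]
  congr 1
  apply Finset.sum_congr rfl
  intro σ _
  rw [Finset.mul_sum]

lemma avoid_zero : ∀ π : Perm (Fin 0), ¬ HasPatt π patt132 := by
  rintro π ⟨f, -, -⟩
  exact (f 0).elim0

lemma cAv_zero : cAv 0 = 1 := by
  rw [cAv, Nat.card_congr (Equiv.subtypeUnivEquiv avoid_zero)]
  simp [Nat.card_eq_fintype_card]

lemma sAv_zero : sAv 0 = 1 := by
  rw [sAv]
  have h : ∀ π : {π : Perm (Fin 0) // ¬ HasPatt π patt132}, ((Perm.sign π.1 : ℤˣ) : ℤ) = 1 := by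
    intro π
    have : π.1 = 1 := Subsingleton.elim _ _
    rw [this]; simp
  rw [Finset.sum_congr rfl (fun π _ => h π), Finset.sum_const, nsmul_eq_mul, mul_one,
    Finset.card_univ, ← Nat.card_eq_fintype_card]
  have := cAv_zero
  rw [cAv] at this
  rw [this]
  norm_num

noncomputable def sClosed (m : ℕ) : ℤ :=
  if m = 0 then 1 else if m % 2 = 1 then catalan (m / 2) else 0

lemma sum_range_odd (g : ℕ → ℤ) (t : ℕ) (hg : ∀ a < 2 * t + 1, a % 2 = 0 → g a = 0) :
    ∑ a ∈ Finset.range (2 * t + 1), g a = ∑ i ∈ Finset.range t, g (2 * i + 1) := by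
  induction t with
  | zero => simp [hg 0 (by omega) rfl]
  | succ t ih =>
    have h2 : 2 * (t + 1) + 1 = (2 * t + 1) + 1 + 1 := by ring
    rw [h2, Finset.sum_range_succ, Finset.sum_range_succ,
      ih (fun a ha he => hg a (by omega) he), Finset.sum_range_succ,
      hg (2 * t + 1 + 1) (by omega) (by omega), add_zero]

lemma sAv_eq_sClosed : ∀ m, sAv m = sClosed m := by
  intro m
  induction m using Nat.strong_induction_on with
  | _ m ih =>
    match m with
    | 0 => rw [sAv_zero, sClosed]; norm_num
    | Nat.succ n =>
      have hrec := sAv_succ n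
      rw [Fin.sum_univ_eq_sum_range
        (fun a => (-1 : ℤ) ^ ((a + 1) * (n - a)) * (sAv a * sAv (n - a))) (n + 1)] at hrec
      rw [hrec]
      rcases Nat.even_or_odd n with ⟨t, ht⟩ | ⟨t, ht⟩
      · -- n = t + t, m = n+1 odd
        have hsc : sClosed (n + 1) = catalan t := by
          rw [sClosed, if_neg (by omega), if_pos (by omega),
            show (n + 1) / 2 = t from by omega]
        rw [hsc]
        rcases Nat.eq_zero_or_pos t with rfl | htpos
        · have hn0 : n = 0 := by omega
          subst hn0
          rw [Finset.sum_range_one, sAv_zero]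
          norm_num
        · obtain ⟨t', rfl⟩ : ∃ t', t = t' + 1 := ⟨t - 1, by omega⟩
          have hn1 : n + 1 = 2 * (t' + 1) + 1 := by omega
          rw [hn1]
          rw [sum_range_odd _ (t' + 1) ?hvan]
          case hvan =>
            intro a ha hae
            rcases Nat.eq_zero_or_pos a with rfl | hapos
            · have h2 : sAv (n - 0) = 0 := by
                rw [ih _ (by omega), sClosed, if_neg (by omega), if_neg (by omega)]
              rw [h2, mul_zero, mul_zero]
            · have h1 : sAv a = 0 := by
                rw [ih _ (by omega), sClosed, if_neg (by omega), if_neg (by omega)]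
              rw [h1, zero_mul, mul_zero]
          have hodd : ∀ i ∈ Finset.range (t' + 1),
              (-1 : ℤ) ^ ((2 * i + 1 + 1) * (n - (2 * i + 1))) *
                (sAv (2 * i + 1) * sAv (n - (2 * i + 1)))
                = (catalan i : ℤ) * catalan (t' - i) := by
            intro i hi
            rw [Finset.mem_range] at hi
            have h1 : sAv (2 * i + 1) = (catalan i : ℤ) := by
              rw [ih _ (by omega), sClosed, if_neg (by omega), if_pos (by omega),
                show (2 * i + 1) / 2 = i from by omega]
            have h2 : sAv (n - (2 * i + 1)) = (catalan (t' - i) : ℤ) := by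
              rw [ih _ (by omega), sClosed, if_neg (by omega), if_pos (by omega),
                show (n - (2 * i + 1)) / 2 = t' - i from by omega]
            have h3 : (-1 : ℤ) ^ ((2 * i + 1 + 1) * (n - (2 * i + 1))) = 1 :=
              Even.neg_one_pow (Even.mul_right ⟨i + 1, by ring⟩ _)
            rw [h1, h2, h3, one_mul]
          rw [Finset.sum_congr rfl hodd]
          have hc : catalan (t' + 1) = ∑ i ∈ Finset.range (t' + 1), catalan i * catalan (t' - i) := by
            rw [catalan_succ, Fin.sum_univ_eq_sum_range
              (fun i => catalan i * catalan (t' - i)) (t' + 1)]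
          rw [hc]
          push_cast
          rfl
      · -- n = 2t+1, m = n+1 even
        have hsc : sClosed (n + 1) = 0 := by
          rw [sClosed, if_neg (by omega), if_neg (by omega)]
        rw [hsc]
        have hsn : sAv n = (catalan t : ℤ) := by
          rw [ih _ (by omega), sClosed, if_neg (by omega), if_pos (by omega),
            show n / 2 = t from by omega]
        have hpt : ∀ a ∈ Finset.range (n + 1),
            (-1 : ℤ) ^ ((a + 1) * (n - a)) * (sAv a * sAv (n - a))
              = (if a = n then (catalan t : ℤ) else 0) + (if a = 0 then -(catalan t : ℤ) else 0) := by
          intro a ha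
          rw [Finset.mem_range] at ha
          by_cases ha0 : a = 0
          · subst ha0
            rw [if_neg (by omega), if_pos rfl, Nat.sub_zero, sAv_zero, hsn]
            have hoddpow : (-1 : ℤ) ^ ((0 + 1) * n) = -1 :=
              Odd.neg_one_pow (by rw [zero_add, one_mul]; exact ⟨t, by omega⟩)
            rw [hoddpow]
            ring
          · by_cases han : a = n
            · subst han
              rw [if_pos rfl, if_neg ha0, Nat.sub_self, sAv_zero, hsn]
              rw [Nat.mul_zero, pow_zero]
              ring
            · rw [if_neg han, if_neg ha0]
              rcases Nat.even_or_odd a with hae | hao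
              · have h1 : sAv a = 0 := by
                  have := Nat.even_iff.1 hae
                  rw [ih _ (by omega), sClosed, if_neg ha0, if_neg (by omega)]
                rw [h1, zero_mul, mul_zero]
                norm_num
              · have h2 : sAv (n - a) = 0 := by
                  have := Nat.odd_iff.1 hao
                  rw [ih _ (by omega), sClosed, if_neg (by omega), if_neg (by omega)]
                rw [h2, mul_zero, mul_zero]
                norm_num
        rw [Finset.sum_congr rfl hpt, Finset.sum_add_distrib,
          Finset.sum_ite_eq' (Finset.range (n + 1)) n, Finset.sum_ite_eq' (Finset.range (n + 1)) 0]
        rw [if_pos (by rw [Finset.mem_range]; omega), if_pos (by rw [Finset.mem_range]; omega)]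
        ring

lemma cAv_eq_catalan : ∀ m, cAv m = catalan m := by
  intro m
  induction m using Nat.strong_induction_on with
  | _ m ih =>
    match m with
    | 0 => rw [cAv_zero, catalan_zero]
    | Nat.succ n =>
      rw [cAv_succ, catalan_succ]
      apply Finset.sum_congr rfl
      intro a _
      rw [ih a.val (by have := a.isLt; omega), ih (n - a.val) (by omega)]

/-- The number of even `132`-avoiding permutations of length `n`. -/
noncomputable def Even132 (n : ℕ) : ℕ :=
  Nat.card {π : Equiv.Perm (Fin n) // Equiv.Perm.sign π = 1 ∧ ¬ HasPatt π patt132}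

/-- The number of odd `132`-avoiding permutations of length `n`. -/
noncomputable def Odd132 (n : ℕ) : ℕ :=
  Nat.card {π : Equiv.Perm (Fin n) // Equiv.Perm.sign π = -1 ∧ ¬ HasPatt π patt132}

lemma split132 (m : ℕ) :
    (Even132 m : ℤ) + Odd132 m = cAv m ∧ (Even132 m : ℤ) - Odd132 m = sAv m := by
  classical
  have hE : Even132 m = (Finset.univ.filter
      (fun π : Perm (Fin m) => Perm.sign π = 1 ∧ ¬ HasPatt π patt132)).card := by
    rw [Even132, Nat.card_eq_fintype_card, Fintype.card_subtype]
  have hO : Odd132 m = (Finset.univ.filter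
      (fun π : Perm (Fin m) => Perm.sign π = -1 ∧ ¬ HasPatt π patt132)).card := by
    rw [Odd132, Nat.card_eq_fintype_card, Fintype.card_subtype]
  have hC : cAv m = (Finset.univ.filter
      (fun π : Perm (Fin m) => ¬ HasPatt π patt132)).card := by
    rw [cAv, Nat.card_eq_fintype_card, Fintype.card_subtype]
  have hS : sAv m = ∑ π ∈ Finset.univ.filter
      (fun π : Perm (Fin m) => ¬ HasPatt π patt132), ((Perm.sign π : ℤˣ) : ℤ) := by
    rw [sAv]
    exact (Finset.sum_subtype
      (Finset.univ.filter (fun π : Perm (Fin m) => ¬ HasPatt π patt132))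
      (fun x => by simp) (fun π => ((Perm.sign π : ℤˣ) : ℤ))).symm
  have hunion : Finset.univ.filter (fun π : Perm (Fin m) => ¬ HasPatt π patt132)
      = (Finset.univ.filter (fun π : Perm (Fin m) => Perm.sign π = 1 ∧ ¬ HasPatt π patt132))
        ∪ (Finset.univ.filter (fun π : Perm (Fin m) => Perm.sign π = -1 ∧ ¬ HasPatt π patt132)) := by
    ext π
    simp only [Finset.mem_filter, Finset.mem_union, Finset.mem_univ, true_and]
    constructor
    · intro h
      rcases Int.units_eq_one_or (Perm.sign π) with hs | hs
      · exact Or.inl ⟨hs, h⟩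
      · exact Or.inr ⟨hs, h⟩
    · rintro (⟨-, h⟩ | ⟨-, h⟩) <;> exact h
  have hdisj : Disjoint
      (Finset.univ.filter (fun π : Perm (Fin m) => Perm.sign π = 1 ∧ ¬ HasPatt π patt132))
      (Finset.univ.filter (fun π : Perm (Fin m) => Perm.sign π = -1 ∧ ¬ HasPatt π patt132)) := by
    rw [Finset.disjoint_left]
    intro π h1 h2
    rw [Finset.mem_filter] at h1 h2
    rw [h1.2.1] at h2
    exact absurd h2.2.1 (by decide)
  constructor
  · rw [hC, hunion, Finset.card_union_of_disjoint hdisj, hE, hO]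
    push_cast
    ring
  · have e1 : ∑ π ∈ Finset.univ.filter
        (fun π : Perm (Fin m) => Perm.sign π = 1 ∧ ¬ HasPatt π patt132),
        ((Perm.sign π : ℤˣ) : ℤ) = (Even132 m : ℤ) := by
      have hone : ∀ π ∈ Finset.univ.filter
          (fun π : Perm (Fin m) => Perm.sign π = 1 ∧ ¬ HasPatt π patt132),
          ((Perm.sign π : ℤˣ) : ℤ) = 1 := by
        intro π hπ
        rw [(Finset.mem_filter.1 hπ).2.1]
        rfl
      rw [Finset.sum_congr rfl hone, Finset.sum_const, nsmul_eq_mul, mul_one, hE]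
    have e2 : ∑ π ∈ Finset.univ.filter
        (fun π : Perm (Fin m) => Perm.sign π = -1 ∧ ¬ HasPatt π patt132),
        ((Perm.sign π : ℤˣ) : ℤ) = -(Odd132 m : ℤ) := by
      have hone : ∀ π ∈ Finset.univ.filter
          (fun π : Perm (Fin m) => Perm.sign π = -1 ∧ ¬ HasPatt π patt132),
          ((Perm.sign π : ℤˣ) : ℤ) = -1 := by
        intro π hπ
        rw [(Finset.mem_filter.1 hπ).2.1]
        rfl
      rw [Finset.sum_congr rfl hone, Finset.sum_const, nsmul_eq_mul, hO]
      ring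
    rw [hS, hunion, Finset.sum_union hdisj, e1, e2]
    ring

/-- For `n ≥ 1`, the number of even `132`-avoiding permutations of length `2n − 1`
equals `(C_{2n−1} + C_{n−1})/2`, and the number of odd ones equals
`(C_{2n−1} − C_{n−1})/2`. -/
theorem even_odd_avoid132_odd_length (n : ℕ) (hn : 1 ≤ n) :
    2 * (Even132 (2 * n - 1) : ℤ) = catalan (2 * n - 1) + catalan (n - 1) ∧
    2 * (Odd132 (2 * n - 1) : ℤ) = catalan (2 * n - 1) - catalan (n - 1) := by
  obtain ⟨t, rfl⟩ : ∃ t, n = t + 1 := ⟨n - 1, by omega⟩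
  have hm : 2 * (t + 1) - 1 = 2 * t + 1 := by omega
  have hm2 : (t + 1) - 1 = t := by omega
  rw [hm, hm2]
  obtain ⟨ha, hb⟩ := split132 (2 * t + 1)
  have hc := cAv_eq_catalan (2 * t + 1)
  have hs := sAv_eq_sClosed (2 * t + 1)
  rw [sClosed, if_neg (by omega), if_pos (by omega),
    show (2 * t + 1) / 2 = t from by omega] at hs
  rw [hc] at ha
  rw [hs] at hb
  constructor <;> omega
end

section
/- Let e(n) and o(n) be the number of even and odd permutations of length n avoiding both 132 and 123. Then Σ_{n≥0} e(n)xⁿ = 1 + x + x²/(1−2x) and Σ_{n≥0} o(n)xⁿ = x²/(1−2x). In particular, e(n) − o(n) = 0 for all n ≥ 2, and e(n)+o(n)=2^{n-1} for n≥1. -/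
/-- The number of even (sign `+1`) permutations of length `n` avoiding both the
pattern `132` and the pattern `τ`. -/
noncomputable def EvenAvoid {k : ℕ} (τ : Equiv.Perm (Fin k)) (n : ℕ) : ℕ :=
  Nat.card {π : Equiv.Perm (Fin n) //
    Equiv.Perm.sign π = 1 ∧ ¬ HasPatt π patt132 ∧ ¬ HasPatt π τ}

/-- The number of odd (sign `−1`) permutations of length `n` avoiding both the
pattern `132` and the pattern `τ`. -/
noncomputable def OddAvoid {k : ℕ} (τ : Equiv.Perm (Fin k)) (n : ℕ) : ℕ :=
  Nat.card {π : Equiv.Perm (Fin n) //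
    Equiv.Perm.sign π = -1 ∧ ¬ HasPatt π patt132 ∧ ¬ HasPatt π τ}

open PowerSeries

/-- Pattern `123` (the identity of length `3`). -/
def patt123 : Equiv.Perm (Fin 3) := 1

section Aux

open Finset

def CC {n : ℕ} (π : Equiv.Perm (Fin n)) : Prop := ∀ i : Fin n, n ≤ (π i : ℕ) + (i : ℕ) + 2

instance {n : ℕ} : DecidablePred (CC (n := n)) := fun π => by unfold CC; infer_instance

lemma hasPatt_or_iff {n : ℕ} (π : Equiv.Perm (Fin n)) :
    (HasPatt π patt132 ∨ HasPatt π patt123) ↔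
    ∃ i j k : Fin n, i < j ∧ j < k ∧ π i < π j ∧ π i < π k := by
  constructor
  · rintro (⟨f, hf, hp⟩ | ⟨f, hf, hp⟩)
    · exact ⟨f 0, f 1, f 2, hf (by decide), hf (by decide),
        (hp 0 1).mp (by decide), (hp 0 2).mp (by decide)⟩
    · exact ⟨f 0, f 1, f 2, hf (by decide), hf (by decide),
        (hp 0 1).mp (by decide), (hp 0 2).mp (by decide)⟩
  · rintro ⟨i, j, k, hij, hjk, h1, h2⟩
    have hne : π j ≠ π k := fun h => absurd (π.injective h) (ne_of_lt hjk)
    have hik : i < k := lt_trans hij hjk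
    rcases lt_or_gt_of_ne hne with h3 | h3
    · right
      refine ⟨![i, j, k], ?_, ?_⟩
      · intro a b hab
        fin_cases a <;> fin_cases b <;>
          simp only [Matrix.cons_val_zero, Matrix.cons_val_one, Matrix.head_cons, Fin.mk_one,
            Matrix.cons_val_two, Matrix.tail_cons, Fin.zero_eta, Fin.mk_zero] <;>
          first
            | exact absurd hab (by decide)
            | assumption
      · intro a b
        fin_cases a <;> fin_cases b <;>
          simp only [Matrix.cons_val_zero, Matrix.cons_val_one, Matrix.head_cons, Fin.mk_one,
            Matrix.cons_val_two, Matrix.tail_cons, Fin.zero_eta, Fin.mk_zero] <;>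
          constructor <;> intro h' <;>
          first
            | decide
            | assumption
            | exact absurd h' (by decide)
            | exact absurd h' (lt_asymm h1)
            | exact absurd h' (lt_asymm h2)
            | exact absurd h' (lt_asymm h3)
            | exact absurd h' (lt_irrefl _)
    · left
      refine ⟨![i, j, k], ?_, ?_⟩
      · intro a b hab
        fin_cases a <;> fin_cases b <;>
          simp only [Matrix.cons_val_zero, Matrix.cons_val_one, Matrix.head_cons, Fin.mk_one,
            Matrix.cons_val_two, Matrix.tail_cons, Fin.zero_eta, Fin.mk_zero] <;>
          first
            | exact absurd hab (by decide)
            | assumption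
      · intro a b
        fin_cases a <;> fin_cases b <;>
          simp only [Matrix.cons_val_zero, Matrix.cons_val_one, Matrix.head_cons, Fin.mk_one,
            Matrix.cons_val_two, Matrix.tail_cons, Fin.zero_eta, Fin.mk_zero] <;>
          constructor <;> intro h' <;>
          first
            | decide
            | assumption
            | exact absurd h' (by decide)
            | exact absurd h' (lt_asymm h1)
            | exact absurd h' (lt_asymm h2)
            | exact absurd h' (lt_asymm h3)
            | exact absurd h' (lt_irrefl _)

lemma no_triple_of_CC {n : ℕ} (π : Equiv.Perm (Fin n)) (hC : CC π) :
    ¬ ∃ i j k : Fin n, i < j ∧ j < k ∧ π i < π j ∧ π i < π k := by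
  rintro ⟨i, j, k, hij, hjk, h1, h2⟩
  have hik : i < k := lt_trans hij hjk
  set S : Finset (Fin n) := insert j (insert k (Iic i)) with hS
  have hkI : k ∉ Iic i := by simp only [mem_Iic]; exact not_le.mpr hik
  have hjI : j ∉ insert k (Iic i) := by
    simp only [mem_insert, mem_Iic]
    push_neg
    exact ⟨ne_of_lt hjk, hij⟩
  have hcardS : S.card = (i : ℕ) + 3 := by
    rw [hS, card_insert_of_notMem hjI, card_insert_of_notMem hkI, Fin.card_Iic]
  set T : Finset (Fin n) := univ.filter (fun v : Fin n => n ≤ (v : ℕ) + (i : ℕ) + 2) with hT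
  have hmapsto : ∀ a ∈ S, π a ∈ T := by
    intro a ha
    rw [hT, mem_filter]
    refine ⟨mem_univ _, ?_⟩
    rw [hS] at ha
    simp only [mem_insert, mem_Iic] at ha
    rcases ha with rfl | rfl | ha
    · have hCi := hC i
      have h1' : (π i : ℕ) < (π a : ℕ) := h1
      omega
    · have hCi := hC i
      have h2' : (π i : ℕ) < (π a : ℕ) := h2
      omega
    · have hCa := hC a
      have ha' : (a : ℕ) ≤ (i : ℕ) := ha
      omega
  have hTcard : T.card ≤ (i : ℕ) + 2 := by
    have heq : T.card = ((Finset.range n).filter (fun v => n ≤ v + (i : ℕ) + 2)).card := by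
      refine Finset.card_bij (fun v _ => (v : ℕ)) ?_ ?_ ?_
      · intro a ha
        rw [hT, mem_filter] at ha
        simp only [mem_filter, mem_range]
        exact ⟨a.isLt, ha.2⟩
      · intro a _ b _ hab
        exact Fin.val_injective hab
      · intro b hb
        simp only [mem_filter, mem_range] at hb
        exact ⟨⟨b, hb.1⟩, by simp [hT, hb.2], rfl⟩
    rw [heq]
    have hsub : (Finset.range n).filter (fun v => n ≤ v + (i : ℕ) + 2) ⊆
        Finset.Ico (n - 2 - (i : ℕ)) n := by
      intro x hx
      simp only [mem_filter, mem_range] at hx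
      simp only [mem_Ico]
      omega
    calc ((Finset.range n).filter (fun v => n ≤ v + (i : ℕ) + 2)).card
        ≤ (Finset.Ico (n - 2 - (i : ℕ)) n).card := Finset.card_le_card hsub
      _ ≤ (i : ℕ) + 2 := by rw [Nat.card_Ico]; omega
  have hinj : Set.InjOn π S := fun a _ b _ h => π.injective h
  have := Finset.card_le_card_of_injOn π hmapsto hinj
  omega

lemma triple_of_not_CC {n : ℕ} (π : Equiv.Perm (Fin n)) (hC : ¬ CC π) :
    ∃ i j k : Fin n, i < j ∧ j < k ∧ π i < π j ∧ π i < π k := by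
  rw [CC] at hC
  push_neg at hC
  obtain ⟨t, ht⟩ := hC
  have hPcard : (univ.filter (fun x : Fin n => π t < π x)).card = n - 1 - (π t : ℕ) := by
    rw [← Fin.card_Ioi]
    apply Finset.card_bij (fun x _ => π x)
    · intro a ha
      rw [mem_filter] at ha
      simpa [Finset.mem_Ioi] using ha.2
    · intro a _ b _ h
      exact π.injective h
    · intro b hb
      exact ⟨π.symm b, by simpa [mem_filter] using Finset.mem_Ioi.mp hb, by simp⟩
  have hsub : (univ.filter (fun x : Fin n => π t < π x)) ⊆
      (univ.filter (fun x : Fin n => t < x ∧ π t < π x)) ∪ Finset.Iio t := by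
    intro x hx
    rw [mem_filter] at hx
    rcases lt_or_ge t x with h | h
    · exact Finset.mem_union_left _ (by simp [mem_filter, h, hx.2])
    · apply Finset.mem_union_right
      rw [Finset.mem_Iio]
      rcases lt_or_eq_of_le h with h' | h'
      · exact h'
      · exact absurd hx.2 (by rw [h']; exact lt_irrefl _)
  have hcard2 : 2 ≤ (univ.filter (fun x : Fin n => t < x ∧ π t < π x)).card := by
    have hc1 := Finset.card_le_card hsub
    have hc2 := Finset.card_union_le
      (univ.filter (fun x : Fin n => t < x ∧ π t < π x)) (Finset.Iio t)
    rw [hPcard] at hc1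
    rw [Fin.card_Iio] at hc2
    have htv : (π t : ℕ) + (t : ℕ) + 2 < n := ht
    have hπt : (π t : ℕ) < n := (π t).isLt
    omega
  obtain ⟨a, ha, b, hb, hab⟩ := Finset.one_lt_card.mp (lt_of_lt_of_le Nat.one_lt_two hcard2)
  rw [mem_filter] at ha hb
  rcases lt_or_gt_of_ne hab with h | h
  · exact ⟨t, a, b, ha.2.1, h, ha.2.2, hb.2.2⟩
  · exact ⟨t, b, a, hb.2.1, h, hb.2.2, ha.2.2⟩

lemma avoid_iff {n : ℕ} (π : Equiv.Perm (Fin n)) :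
    (¬ HasPatt π patt132 ∧ ¬ HasPatt π patt123) ↔ CC π := by
  rw [← not_or, hasPatt_or_iff]
  constructor
  · intro h
    by_contra hCn
    exact h (triple_of_not_CC π hCn)
  · intro h
    exact no_triple_of_CC π h

end Aux
section Count

open Finset

def avSet (n : ℕ) : Finset (Equiv.Perm (Fin n)) := univ.filter CC

def insPerm {n : ℕ} (p : Fin (n+2)) (σ : Equiv.Perm (Fin (n+1))) : Equiv.Perm (Fin (n+2)) :=
  (finSuccEquiv' (0 : Fin (n+2))).trans ((Equiv.optionCongr σ).trans (finSuccEquiv' p).symm)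

lemma insPerm_zero {n : ℕ} (p : Fin (n+2)) (σ : Equiv.Perm (Fin (n+1))) :
    insPerm p σ 0 = p := by
  rw [insPerm, Equiv.trans_apply, Equiv.trans_apply, finSuccEquiv'_at]
  rw [Equiv.optionCongr_apply, Option.map_none]
  exact finSuccEquiv'_symm_none p

lemma insPerm_succ {n : ℕ} (p : Fin (n+2)) (σ : Equiv.Perm (Fin (n+1))) (i : Fin (n+1)) :
    insPerm p σ i.succ = p.succAbove (σ i) := by
  have h0 : (0 : Fin (n+2)).succAbove i = i.succ := by
    rw [Fin.succAbove_zero]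
  rw [insPerm, Equiv.trans_apply, Equiv.trans_apply, ← h0, finSuccEquiv'_succAbove,
    Equiv.optionCongr_apply, Option.map_some, finSuccEquiv'_symm_some]

lemma CC_insPerm_iff {n : ℕ} (p : Fin (n+2)) (hp : n ≤ (p : ℕ)) (σ : Equiv.Perm (Fin (n+1))) :
    CC (insPerm p σ) ↔ CC σ := by
  constructor
  · intro h t
    have ht := h t.succ
    rw [insPerm_succ] at ht
    have hts : (t.succ : ℕ) = (t : ℕ) + 1 := Fin.val_succ t
    rcases lt_or_ge ((σ t).castSucc) p with hc | hc
    · rw [Fin.succAbove_of_castSucc_lt _ _ hc, Fin.coe_castSucc] at ht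
      omega
    · have hle : (p : ℕ) ≤ (σ t : ℕ) := by
        have := Fin.le_def.mp hc
        rwa [Fin.coe_castSucc] at this
      omega
  · intro h t
    induction t using Fin.cases with
    | zero =>
      rw [insPerm_zero]
      have h0 : ((0 : Fin (n+2)) : ℕ) = 0 := rfl
      omega
    | succ s =>
      rw [insPerm_succ]
      have h1 : (σ s : ℕ) ≤ (p.succAbove (σ s) : ℕ) := by
        rcases lt_or_ge ((σ s).castSucc) p with hc | hc
        · rw [Fin.succAbove_of_castSucc_lt _ _ hc, Fin.coe_castSucc]
        · rw [Fin.succAbove_of_le_castSucc _ _ hc, Fin.val_succ]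
          omega
      have h2 := h s
      have hts : (s.succ : ℕ) = (s : ℕ) + 1 := Fin.val_succ s
      omega

def pp (n : ℕ) (b : Bool) : Fin (n+2) := if b then Fin.last (n+1) else ⟨n, by omega⟩

lemma pp_val (n : ℕ) (b : Bool) : (pp n b : ℕ) = if b then n+1 else n := by
  cases b <;> simp [pp, Fin.last]

lemma pp_ge (n : ℕ) (b : Bool) : n ≤ (pp n b : ℕ) := by
  rw [pp_val]; cases b <;> simp

lemma avSet_card_step (n : ℕ) : (avSet (n+2)).card = 2 * (avSet (n+1)).card := by
  have key : ((univ : Finset Bool) ×ˢ avSet (n+1)).card = (avSet (n+2)).card := by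
    refine Finset.card_bij (fun x _ => insPerm (pp n x.1) x.2) ?_ ?_ ?_
    · rintro ⟨b, σ⟩ hx
      rw [Finset.mem_product, avSet, mem_filter] at hx
      rw [avSet, mem_filter]
      exact ⟨mem_univ _, (CC_insPerm_iff _ (pp_ge n b) σ).mpr hx.2.2⟩
    · rintro ⟨b, σ⟩ _ ⟨b', σ'⟩ _ hEq
      have h0 : pp n b = pp n b' := by
        have := congrArg (fun (e : Equiv.Perm (Fin (n+2))) => e 0) hEq
        simpa [insPerm_zero] using this
      have hb : b = b' := by
        have := congrArg (Fin.val) h0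
        rw [pp_val, pp_val] at this
        cases b <;> cases b' <;> simp_all
      subst hb
      have hσ : σ = σ' := by
        ext i
        have := congrArg (fun (e : Equiv.Perm (Fin (n+2))) => e i.succ) hEq
        simp only [insPerm_succ] at this
        have := Fin.succAbove_right_injective (p := pp n b) this
        exact congrArg Fin.val this
      rw [hσ]
    · intro π hπ
      rw [avSet, mem_filter] at hπ
      have hCπ := hπ.2
      have hp0 : n ≤ (π 0 : ℕ) := by
        have := hCπ 0
        have h0 : ((0 : Fin (n+2)) : ℕ) = 0 := rfl
        omega
      have hp0' : (π 0 : ℕ) < n + 2 := (π 0).isLt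
      set b : Bool := decide ((π 0 : ℕ) = n + 1) with hb
      have hppb : pp n b = π 0 := by
        apply Fin.ext
        rw [pp_val]
        by_cases hc : (π 0 : ℕ) = n + 1
        · simp [hb, hc]
        · have : (π 0 : ℕ) = n := by omega
          simp [hb, hc, this]
      set e : Option (Fin (n+1)) ≃ Option (Fin (n+1)) :=
        (finSuccEquiv' (0 : Fin (n+2))).symm.trans (π.trans (finSuccEquiv' (π 0))) with he
      have hnone : e none = none := by
        simp [he, finSuccEquiv'_symm_none, finSuccEquiv'_at]
      set σ : Equiv.Perm (Fin (n+1)) := Equiv.removeNone e with hσ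
      have hsome : ∀ s : Fin (n+1), e (some s) = some (σ s) := by
        intro s
        have hex : ∃ x', e (some s) = some x' := by
          cases hcase : e (some s) with
          | none =>
            exfalso
            have := e.injective (hcase.trans hnone.symm)
            simp at this
          | some x => exact ⟨x, rfl⟩
        exact (Equiv.removeNone_some e hex).symm
    -- show insPerm (pp n b) σ = π
      have hins : insPerm (π 0) σ = π := by
        apply Equiv.ext
        intro t
        induction t using Fin.cases with
        | zero => rw [insPerm_zero]
        | succ s =>
          rw [insPerm_succ]
          have h1 : e (some s) = finSuccEquiv' (π 0) (π s.succ) := by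
            have h2 : (finSuccEquiv' (0 : Fin (n+2))).symm (some s) = s.succ := by
              rw [finSuccEquiv'_symm_some, Fin.succAbove_zero]
            simp [he, h2]
          have h3 := (hsome s).symm.trans h1
          have := congrArg (finSuccEquiv' (π 0)).symm h3
          rw [Equiv.symm_apply_apply, finSuccEquiv'_symm_some] at this
          exact this
      refine ⟨(b, σ), ?_, ?_⟩
      · rw [Finset.mem_product, avSet, mem_filter]
        refine ⟨mem_univ _, mem_univ _, ?_⟩
        have := (CC_insPerm_iff (π 0) hp0 σ).mp (by rw [hins]; exact hCπ)
        exact this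
      · show insPerm (pp n b) σ = π
        rw [hppb, hins]
  rw [← key, Finset.card_product]
  simp

lemma avSet_card_succ (n : ℕ) : (avSet (n+1)).card = 2 ^ n := by
  induction n with
  | zero =>
    have h : ∀ π : Equiv.Perm (Fin 1), π ∈ univ → CC π := fun π _ i => by omega
    rw [avSet, Finset.filter_true_of_mem h]
    simp [Finset.card_univ]
  | succ m ih =>
    rw [avSet_card_step, ih]
    ring

end Count
section Sign

open Finset

def eSet (n : ℕ) : Finset (Equiv.Perm (Fin n)) :=
  (avSet n).filter (fun π => Equiv.Perm.sign π = 1)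

def oSet (n : ℕ) : Finset (Equiv.Perm (Fin n)) :=
  (avSet n).filter (fun π => Equiv.Perm.sign π = -1)

lemma one_ne_negone : (1 : ℤˣ) ≠ -1 := by decide

lemma eo_card (n : ℕ) : (eSet n).card + (oSet n).card = (avSet n).card := by
  rw [eSet, oSet]
  have h : ∀ π ∈ avSet n, (Equiv.Perm.sign π = -1) ↔ ¬ (Equiv.Perm.sign π = 1) := by
    intro π _
    rcases Int.units_eq_one_or (Equiv.Perm.sign π) with h | h <;> simp [h, one_ne_negone]
  rw [Finset.filter_congr h]
  exact Finset.card_filter_add_card_filter_not _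

lemma eo_eq (n : ℕ) : (eSet (n+2)).card = (oSet (n+2)).card := by
  have hne : (⟨n, by omega⟩ : Fin (n+2)) ≠ ⟨n+1, by omega⟩ := by
    simp [Fin.ext_iff]
  set s : Equiv.Perm (Fin (n+2)) := Equiv.swap ⟨n, by omega⟩ ⟨n+1, by omega⟩ with hs
  have hsign : Equiv.Perm.sign s = -1 := Equiv.Perm.sign_swap hne
  have hCC : ∀ π : Equiv.Perm (Fin (n+2)), CC π → CC (s * π) := by
    intro π h i
    have hi := h i
    have happ : (s * π) i = s (π i) := rfl
    rw [happ]
    by_cases h1 : π i = (⟨n, by omega⟩ : Fin (n+2))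
    · rw [h1, hs, Equiv.swap_apply_left]
      simp only []
      omega
    · by_cases h2 : π i = (⟨n+1, by omega⟩ : Fin (n+2))
      · rw [h2, hs, Equiv.swap_apply_right]
        simp only []
        omega
      · rw [hs, Equiv.swap_apply_of_ne_of_ne h1 h2]
        omega
  have hinv : ∀ π : Equiv.Perm (Fin (n+2)), s * (s * π) = π := by
    intro π
    rw [← mul_assoc, hs, Equiv.swap_mul_self, one_mul]
  refine Finset.card_nbij' (fun π => s * π) (fun π => s * π) ?_ ?_ ?_ ?_
  · intro π hπ
    simp only [Finset.mem_coe] at hπ ⊢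
    rw [eSet, mem_filter, avSet, mem_filter] at hπ
    rw [oSet, mem_filter, avSet, mem_filter]
    refine ⟨⟨mem_univ _, hCC _ hπ.1.2⟩, ?_⟩
    rw [map_mul, hsign, hπ.2, mul_one]
  · intro π hπ
    simp only [Finset.mem_coe] at hπ ⊢
    rw [oSet, mem_filter, avSet, mem_filter] at hπ
    rw [eSet, mem_filter, avSet, mem_filter]
    refine ⟨⟨mem_univ _, hCC _ hπ.1.2⟩, ?_⟩
    rw [map_mul, hsign, hπ.2]
    decide
  · intro π _
    exact hinv π
  · intro π _
    exact hinv π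

lemma eSet_card_step (n : ℕ) : (eSet (n+2)).card = 2 ^ n := by
  have h1 := eo_card (n+2)
  have h2 := eo_eq n
  have h3 : (avSet (n+2)).card = 2 ^ (n+1) := avSet_card_succ (n+1)
  have : 2 ^ (n+1) = 2 * 2 ^ n := by ring
  omega

lemma oSet_card_step (n : ℕ) : (oSet (n+2)).card = 2 ^ n := by
  rw [← eo_eq]
  exact eSet_card_step n

lemma eSet_card_zero : (eSet 0).card = 1 := by decide

lemma oSet_card_zero : (oSet 0).card = 0 := by decide

lemma eSet_card_one : (eSet 1).card = 1 := by decide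

lemma oSet_card_one : (oSet 1).card = 0 := by decide

end Sign

section Bridge

open Finset

lemma evenAvoid_eq_card (n : ℕ) : EvenAvoid patt123 n = (eSet n).card := by
  have h : ∀ π : Equiv.Perm (Fin n),
      (Equiv.Perm.sign π = 1 ∧ ¬ HasPatt π patt132 ∧ ¬ HasPatt π patt123)
        ↔ (CC π ∧ Equiv.Perm.sign π = 1) := by
    intro π
    constructor
    · rintro ⟨hsg, h1, h2⟩
      exact ⟨(avoid_iff π).mp ⟨h1, h2⟩, hsg⟩
    · rintro ⟨hC, hsg⟩
      exact ⟨hsg, ((avoid_iff π).mpr hC).1, ((avoid_iff π).mpr hC).2⟩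
  rw [EvenAvoid, Nat.card_congr (Equiv.subtypeEquivRight h), Nat.card_eq_fintype_card,
    Fintype.card_subtype, eSet, avSet, Finset.filter_filter]

lemma oddAvoid_eq_card (n : ℕ) : OddAvoid patt123 n = (oSet n).card := by
  have h : ∀ π : Equiv.Perm (Fin n),
      (Equiv.Perm.sign π = -1 ∧ ¬ HasPatt π patt132 ∧ ¬ HasPatt π patt123)
        ↔ (CC π ∧ Equiv.Perm.sign π = -1) := by
    intro π
    constructor
    · rintro ⟨hsg, h1, h2⟩
      exact ⟨(avoid_iff π).mp ⟨h1, h2⟩, hsg⟩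
    · rintro ⟨hC, hsg⟩
      exact ⟨hsg, ((avoid_iff π).mpr hC).1, ((avoid_iff π).mpr hC).2⟩
  rw [OddAvoid, Nat.card_congr (Equiv.subtypeEquivRight h), Nat.card_eq_fintype_card,
    Fintype.card_subtype, oSet, avSet, Finset.filter_filter]

lemma evenAvoid_zero : EvenAvoid patt123 0 = 1 := by
  rw [evenAvoid_eq_card, eSet_card_zero]

lemma evenAvoid_one : EvenAvoid patt123 1 = 1 := by
  rw [evenAvoid_eq_card, eSet_card_one]

lemma evenAvoid_step (n : ℕ) : EvenAvoid patt123 (n+2) = 2 ^ n := by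
  rw [evenAvoid_eq_card, eSet_card_step]

lemma oddAvoid_zero : OddAvoid patt123 0 = 0 := by
  rw [oddAvoid_eq_card, oSet_card_zero]

lemma oddAvoid_one : OddAvoid patt123 1 = 0 := by
  rw [oddAvoid_eq_card, oSet_card_one]

lemma oddAvoid_step (n : ℕ) : OddAvoid patt123 (n+2) = 2 ^ n := by
  rw [oddAvoid_eq_card, oSet_card_step]

end Bridge
section PS

def gq : ℕ → ℚ := fun n => if 2 ≤ n then 2 ^ (n - 2) else 0

lemma two_eq_C : (2 : PowerSeries ℚ) = PowerSeries.C (R := ℚ) 2 := (map_ofNat (PowerSeries.C (R := ℚ)) 2).symm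

lemma key_mul : (PowerSeries.mk gq) * (1 - 2 * PowerSeries.X) = (PowerSeries.X : PowerSeries ℚ) ^ 2 := by
  ext n
  rw [mul_sub, mul_one,
    show (PowerSeries.mk gq) * (2 * PowerSeries.X)
        = PowerSeries.C (R := ℚ) 2 * (PowerSeries.mk gq * PowerSeries.X) by rw [← two_eq_C]; ring]
  rw [map_sub, PowerSeries.coeff_C_mul, PowerSeries.coeff_X_pow]
  cases n with
  | zero =>
    rw [PowerSeries.coeff_zero_mul_X, PowerSeries.coeff_mk]
    simp [gq]
  | succ m =>
    rw [PowerSeries.coeff_succ_mul_X, PowerSeries.coeff_mk, PowerSeries.coeff_mk]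
    match m with
    | 0 => simp [gq]
    | 1 => norm_num [gq]
    | (k+2) =>
      rw [gq, gq]
      simp only [if_pos (by omega : 2 ≤ k+2+1), if_pos (by omega : 2 ≤ k+2),
        if_neg (by omega : ¬ (k+2+1 = 2))]
      have h1 : k + 2 + 1 - 2 = k + 1 := by omega
      have h2 : k + 2 - 2 = k := by omega
      rw [h1, h2, pow_succ]
      ring

lemma hconst : PowerSeries.constantCoeff (R := ℚ) (1 - 2 * PowerSeries.X) ≠ 0 := by
  simp only [map_sub, map_one, map_mul, PowerSeries.constantCoeff_X, mul_zero]
  norm_num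

lemma hfrac : (PowerSeries.X : PowerSeries ℚ) ^ 2 * (1 - 2 * PowerSeries.X)⁻¹
    = PowerSeries.mk gq := by
  rw [← key_mul, mul_assoc, PowerSeries.mul_inv_cancel _ hconst, mul_one]

end PS

/-- With `e(n)` and `o(n)` the numbers of even and odd permutations of length `n`
avoiding both `132` and `123`:
`Σ e(n) xⁿ = 1 + x + x²/(1−2x)` and `Σ o(n) xⁿ = x²/(1−2x)`; in particular
`e(n) = o(n)` for `n ≥ 2` and `e(n) + o(n) = 2^{n−1}` for `n ≥ 1`. -/
theorem gf_avoid_132_123 :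
    PowerSeries.mk (fun n => (EvenAvoid patt123 n : ℚ)) =
      1 + PowerSeries.X + PowerSeries.X ^ 2 * (1 - 2 * PowerSeries.X)⁻¹ ∧
    PowerSeries.mk (fun n => (OddAvoid patt123 n : ℚ)) =
      PowerSeries.X ^ 2 * (1 - 2 * PowerSeries.X)⁻¹ ∧
    (∀ n : ℕ, 2 ≤ n → EvenAvoid patt123 n = OddAvoid patt123 n) ∧
    (∀ n : ℕ, 1 ≤ n → EvenAvoid patt123 n + OddAvoid patt123 n = 2 ^ (n - 1)) := by
  refine ⟨?_, ?_, ?_, ?_⟩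
  · rw [hfrac]
    ext n
    rw [map_add, map_add, PowerSeries.coeff_mk, PowerSeries.coeff_one, PowerSeries.coeff_X,
      PowerSeries.coeff_mk]
    match n with
    | 0 => rw [evenAvoid_zero]; simp [gq]
    | 1 => rw [evenAvoid_one]; simp [gq]
    | (m+2) =>
      rw [evenAvoid_step]
      have h1 : ¬ (m + 2 = 0) := by omega
      have h2 : ¬ (m + 2 = 1) := by omega
      rw [if_neg h1, if_neg h2, gq, if_pos (by omega : 2 ≤ m+2)]
      have h3 : m + 2 - 2 = m := by omega
      rw [h3]
      push_cast
      ring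
  · rw [hfrac]
    ext n
    rw [PowerSeries.coeff_mk, PowerSeries.coeff_mk]
    match n with
    | 0 => rw [oddAvoid_zero]; simp [gq]
    | 1 => rw [oddAvoid_one]; simp [gq]
    | (m+2) =>
      rw [oddAvoid_step, gq, if_pos (by omega : 2 ≤ m+2)]
      have h3 : m + 2 - 2 = m := by omega
      rw [h3]
      push_cast
      ring
  · intro n hn
    match n, hn with
    | (m+2), _ => rw [evenAvoid_step, oddAvoid_step]
  · intro n hn
    match n, hn with
    | 1, _ => rw [evenAvoid_one, oddAvoid_one]; rfl
    | (m+2), _ =>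
      rw [evenAvoid_step, oddAvoid_step]
      have : m + 2 - 1 = m + 1 := by omega
      rw [this, pow_succ]
      ring
end

section
/- Let M_k(x)=Σ_{n≥0}(e_k(n)−o_k(n))xⁿ where e_k(n), o_k(n) count even and odd 132-avoiding permutations of length n avoiding the increasing pattern 12⋯k. Then for all k≥1, M_{2k−1}(x)=1+x·R_{k−1}(x²) and M_{2k}(x)=(1+x·R_k(x²))·R_k(x²)/(1+x²·R_k(x²)²), where R_m(x) is defined by R_0(x)=0 (so R_0 terms vanish) and R_m(x)=1/(1−x·R_{m−1}(x)). -/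
open PowerSeries

/-- The power series `R_m`: `R_0 = 0`, `R_m = 1/(1 − X·R_{m−1})`. -/
noncomputable def Rps : ℕ → PowerSeries ℚ
  | 0 => 0
  | (m + 1) => (1 - PowerSeries.X * Rps m)⁻¹

/-- Substitution of `x²` for `x` in a power series. -/
noncomputable def sub2 (f : PowerSeries ℚ) : PowerSeries ℚ :=
  PowerSeries.mk fun n => if 2 ∣ n then PowerSeries.coeff (R := ℚ) (n / 2) f else 0

/-- `M_k(x) = Σ (e_k(n) − o_k(n)) xⁿ`, where `e_k(n)` and `o_k(n)` count even and odd
`132`-avoiding permutations of length `n` avoiding the increasing pattern `12⋯k`. -/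
noncomputable def Mgf (k : ℕ) : PowerSeries ℚ :=
  PowerSeries.mk fun n =>
    (EvenAvoid (1 : Equiv.Perm (Fin k)) n : ℚ) - (OddAvoid (1 : Equiv.Perm (Fin k)) n : ℚ)

/-!
A 132-avoiding permutation of length `n + 1` whose maximum sits at position `j` is, in one-line
notation, `(α + m) n β` with `α`, `β` 132-avoiding of lengths `j` and `m = n - j`. It avoids
`12⋯(K+1)` iff `α` avoids `12⋯K` and `β` avoids `12⋯(K+1)`, and its sign is
`(-1)^(n m) sign α sign β`. So the signed counts satisfy a quadratic recurrence, i.e. a functional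
equation linking `M_{K+2}(x)`, `M_{K+2}(-x)` and `M_{K+1}(±x)`. Starting from `M_1 = 1`, solving
this linear system for `M_{K+2}(±x)` alternately gives the odd and even formulas by induction.
-/

open Equiv Finset

section Occurrence

variable {n k a : ℕ} {π : Perm (Fin n)}

def IsOccurrence (π : Perm (Fin n)) (τ : Perm (Fin k)) (f : Fin k → Fin n) : Prop :=
  StrictMono f ∧ ∀ i j, τ i < τ j ↔ π (f i) < π (f j)

theorem hasPatt_iff_exists_isOccurrence (τ : Perm (Fin k)) :
    HasPatt π τ ↔ ∃ f, IsOccurrence π τ f :=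
  Iff.rfl

theorem IsOccurrence.comp {σ : Perm (Fin a)} {τ : Perm (Fin k)} {e : Fin a → Fin n}
    {f : Fin k → Fin a} (he : IsOccurrence π σ e) (hf : IsOccurrence σ τ f) :
    IsOccurrence π τ (e ∘ f) :=
  ⟨he.1.comp hf.1, fun i j => (hf.2 i j).trans (he.2 (f i) (f j))⟩

theorem IsOccurrence.hasPatt_trans {σ : Perm (Fin a)} {τ : Perm (Fin k)} {e : Fin a → Fin n}
    (he : IsOccurrence π σ e) (h : HasPatt σ τ) : HasPatt π τ :=
  let ⟨_, hf⟩ := h; ⟨_, he.comp hf⟩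

theorem IsOccurrence.hasPatt_of_forall_mem_range {σ : Perm (Fin a)} {τ : Perm (Fin k)}
    {e : Fin a → Fin n} {f : Fin k → Fin n} (he : IsOccurrence π σ e)
    (hf : IsOccurrence π τ f) (hrange : ∀ i, f i ∈ Set.range e) : HasPatt σ τ := by
  choose g hg using hrange
  refine ⟨g, fun i j hij => he.1.lt_iff_lt.mp ?_, fun i j => ?_⟩
  · simpa only [hg] using hf.1 hij
  · rw [he.2, hg, hg, hf.2]

theorem isOccurrence_one_iff {f : Fin k → Fin n} :
    IsOccurrence π (1 : Perm (Fin k)) f ↔ StrictMono f ∧ StrictMono (π ∘ f) :=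
  and_congr_right fun _ =>
    ⟨fun h _ _ hij => (h _ _).mp hij, fun h _ _ => h.lt_iff_lt.symm⟩

theorem IsOccurrence.patt132_apply_lt {f : Fin 3 → Fin n} (hf : IsOccurrence π patt132 f) :
    π (f 0) < π (f 2) ∧ π (f 2) < π (f 1) :=
  ⟨(hf.2 0 2).mp (by decide), (hf.2 2 1).mp (by decide)⟩

theorem hasPatt_patt132_of_lt {x y z : Fin n} (hxy : x < y) (hyz : y < z)
    (hxz : π x < π z) (hzy : π z < π y) : HasPatt π patt132 := by
  refine ⟨![x, y, z], ?_, ?_⟩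
  · refine Fin.strictMono_iff_lt_succ.mpr fun i => ?_
    fin_cases i <;> simpa
  · have hyx : π x < π y := hxz.trans hzy
    intro i j
    fin_cases i <;> fin_cases j <;>
      simp [patt132, swap_apply_of_ne_of_ne, hxz, hzy, hyx, hxz.not_gt, hzy.not_gt, hyx.not_gt]

end Occurrence

theorem Fin.strictMono_snoc {α : Type*} [Preorder α] {K : ℕ} {f : Fin K → α} {x : α}
    (hf : StrictMono f) (hx : ∀ i, f i < x) : StrictMono (Fin.snoc f x : Fin (K + 1) → α) := by
  intro a b hab
  induction b using Fin.lastCases with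
  | last =>
    obtain ⟨a, rfl⟩ := Fin.exists_castSucc_eq.mpr hab.ne
    simpa using hx a
  | cast b =>
    obtain ⟨a, rfl⟩ := Fin.exists_castSucc_eq.mpr (hab.trans (Fin.castSucc_lt_last b)).ne
    simpa using hf (Fin.castSucc_lt_castSucc_iff.mp hab)

theorem val_finRotate_pow_apply {N : ℕ} (m : ℕ) (i : Fin (N + 1)) :
    ((finRotate (N + 1) ^ m) i).val = (i.val + m) % (N + 1) := by
  induction m with
  | zero => simp [Nat.mod_eq_of_lt i.isLt]
  | succ m ih =>
    rw [pow_succ', Perm.mul_apply, finRotate_apply, Fin.val_add, ih, Fin.val_one', Nat.add_mod_mod,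
      Nat.mod_add_mod, add_assoc]

section Glue

variable {j m n : ℕ} (h : j + 1 + m = n + 1) (α : Perm (Fin j)) (β : Perm (Fin m))

def blockEquiv : Fin j ⊕ (Fin 1 ⊕ Fin m) ≃ Fin (n + 1) :=
  ((Equiv.refl _).sumCongr finSumFinEquiv).trans (finSumFinEquiv.trans (finCongr (by omega)))

/-- `glue h α β` is `(α + m) n β` in one-line notation: `α` shifted up by `m` on the first `j`
positions, then the maximum `n`, then `β`. -/
def glue : Perm (Fin (n + 1)) :=
  finRotate (n + 1) ^ m * (blockEquiv h).permCongr (α.sumCongr ((1 : Perm (Fin 1)).sumCongr β))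

theorem val_glue_blockEquiv (y : Fin j ⊕ (Fin 1 ⊕ Fin m)) :
    (glue h α β (blockEquiv h y)).val =
      ((blockEquiv h (α.sumCongr ((1 : Perm (Fin 1)).sumCongr β) y)).val + m) % (n + 1) := by
  simp only [glue, Perm.mul_apply, permCongr_apply, symm_apply_apply, val_finRotate_pow_apply]

theorem val_glue_of_lt (x : Fin (n + 1)) (hx : x.val < j) :
    (glue h α β x).val = (α ⟨x, hx⟩).val + m := by
  have hx' : blockEquiv h (.inl ⟨x, hx⟩) = x := by ext; simp [blockEquiv]
  conv_lhs => rw [← hx']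
  rw [val_glue_blockEquiv]
  simp only [blockEquiv, sumCongr_apply, Sum.map_inl, trans_apply, finSumFinEquiv_apply_left,
    finCongr_apply, Fin.val_cast, Fin.val_castAdd]
  exact Nat.mod_eq_of_lt (by have := (α ⟨x, hx⟩).isLt; omega)

theorem glue_of_eq (x : Fin (n + 1)) (hx : x.val = j) : glue h α β x = Fin.last n := by
  have hx' : blockEquiv h (.inr (.inl 0)) = x := by ext; simp [blockEquiv, hx]
  ext
  conv_lhs => rw [← hx']
  rw [val_glue_blockEquiv]
  simp [blockEquiv, show j + m = n by omega]

theorem val_glue_of_gt (x : Fin (n + 1)) (hx : j < x.val) :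
    (glue h α β x).val = (β ⟨x - (j + 1), by omega⟩).val := by
  have hx' : blockEquiv h (.inr (.inr ⟨x - (j + 1), by omega⟩)) = x := by
    ext
    simp only [blockEquiv, trans_apply, sumCongr_apply, Sum.map_inr, finSumFinEquiv_apply_right,
      Fin.natAdd_mk, finCongr_apply, Fin.cast_mk]
    omega
  conv_lhs => rw [← hx']
  rw [val_glue_blockEquiv]
  simp only [blockEquiv, Perm.sumCongr_apply, Sum.map_inr, trans_apply, sumCongr_apply,
    finSumFinEquiv_apply_right, finCongr_apply, Fin.val_cast, Fin.val_natAdd]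
  generalize β _ = b
  have := b.isLt
  rw [show j + (1 + b.val) + m = b.val + (n + 1) by omega, Nat.add_mod_right,
    Nat.mod_eq_of_lt (by omega)]

theorem sign_glue : Perm.sign (glue h α β) = (-1) ^ (n * m) * Perm.sign α * Perm.sign β := by
  rw [glue, map_mul, map_pow, sign_finRotate, Perm.sign_permCongr, Perm.sign_sumCongr,
    Perm.sign_sumCongr]
  simp only [add_tsub_cancel_right, ← pow_mul, Perm.sign_one, one_mul, mul_assoc]

def posLeft (a : Fin j) : Fin (n + 1) := ⟨a, by omega⟩

def posRight (b : Fin m) : Fin (n + 1) := ⟨j + 1 + b, by omega⟩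

theorem mem_range_posLeft {x : Fin (n + 1)} (hx : x.val < j) : x ∈ Set.range (posLeft h) :=
  ⟨⟨x, hx⟩, rfl⟩

theorem mem_range_posRight {x : Fin (n + 1)} (hx : j < x.val) : x ∈ Set.range (posRight h) :=
  ⟨⟨x - (j + 1), by omega⟩, by ext; simp only [posRight]; omega⟩

theorem val_glue_posRight (b : Fin m) : (glue h α β (posRight h b)).val = (β b).val := by
  rw [val_glue_of_gt h α β _ (by simp only [posRight]; omega)]
  simp [posRight]

theorem isOccurrence_glue_posLeft : IsOccurrence (glue h α β) α (posLeft h) := by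
  refine ⟨fun a b hab => hab, fun a b => ?_⟩
  rw [Fin.lt_def, Fin.lt_def, val_glue_of_lt h α β _ a.isLt, val_glue_of_lt h α β _ b.isLt]
  exact (Nat.add_lt_add_iff_right).symm

theorem isOccurrence_glue_posRight : IsOccurrence (glue h α β) β (posRight h) := by
  refine ⟨fun a b hab => Nat.add_lt_add_left hab _, fun a b => ?_⟩
  rw [Fin.lt_def, Fin.lt_def, val_glue_posRight, val_glue_posRight]

theorem glue_lt_glue_of_le_of_lt {x y : Fin (n + 1)} (hx : x.val ≤ j) (hy : j < y.val) :
    glue h α β y < glue h α β x := by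
  rw [Fin.lt_def, val_glue_of_gt h α β y hy]
  have := (β ⟨y - (j + 1), by omega⟩).isLt
  rcases hx.lt_or_eq with hx | hx
  · rw [val_glue_of_lt h α β x hx]
    omega
  · rw [glue_of_eq h α β x hx, Fin.val_last]
    omega

theorem hasPatt_patt132_glue_iff :
    HasPatt (glue h α β) patt132 ↔ HasPatt α patt132 ∨ HasPatt β patt132 := by
  rw [hasPatt_iff_exists_isOccurrence]
  refine ⟨fun ⟨f, hf⟩ => ?_, ?_⟩
  · obtain ⟨h02, h21⟩ := hf.patt132_apply_lt
    have hf0 (i : Fin 3) : (f 0).val ≤ (f i).val := hf.1.monotone (Fin.zero_le i)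
    have hf2 (i : Fin 3) : (f i).val ≤ (f 2).val := hf.1.monotone (Fin.le_last i)
    by_cases hlow : (f 2).val < j
    · exact .inl <| (isOccurrence_glue_posLeft h α β).hasPatt_of_forall_mem_range hf
        fun i => mem_range_posLeft h ((hf2 i).trans_lt hlow)
    · have hhigh : j < (f 0).val := by
        by_contra! hf0j
        rcases (not_lt.mp hlow).lt_or_eq with hj2 | hj2
        · exact (glue_lt_glue_of_le_of_lt h α β hf0j hj2).not_gt h02
        · rw [glue_of_eq h α β _ hj2.symm] at h21
          exact h21.not_ge (Fin.le_last _)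
      exact .inr <| (isOccurrence_glue_posRight h α β).hasPatt_of_forall_mem_range hf
        fun i => mem_range_posRight h (hhigh.trans_le (hf0 i))
  · rintro (hα | hβ)
    · exact (isOccurrence_glue_posLeft h α β).hasPatt_trans hα
    · exact (isOccurrence_glue_posRight h α β).hasPatt_trans hβ

theorem hasPatt_one_glue_iff (K : ℕ) :
    HasPatt (glue h α β) (1 : Perm (Fin (K + 1))) ↔
      HasPatt α (1 : Perm (Fin K)) ∨ HasPatt β (1 : Perm (Fin (K + 1))) := by
  refine ⟨fun ⟨f, hf⟩ => ?_, ?_⟩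
  · obtain ⟨hf, hπf⟩ := isOccurrence_one_iff.mp hf
    by_cases hhigh : j < (f 0).val
    · exact .inr <| (isOccurrence_glue_posRight h α β).hasPatt_of_forall_mem_range
        (isOccurrence_one_iff.mpr ⟨hf, hπf⟩)
        fun i => mem_range_posRight h (hhigh.trans_le (hf.monotone (Fin.zero_le i)))
    · have hlast : (f (Fin.last K)).val ≤ j := by
        by_contra! hlast
        exact (glue_lt_glue_of_le_of_lt h α β (not_lt.mp hhigh) hlast).not_ge
          (hπf.monotone (Fin.zero_le _))
      refine .inl <| (isOccurrence_glue_posLeft h α β).hasPatt_of_forall_mem_range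
        (f := f ∘ Fin.castSucc)
        (isOccurrence_one_iff.mpr ⟨hf.comp Fin.strictMono_castSucc,
          hπf.comp Fin.strictMono_castSucc⟩)
        fun i => mem_range_posLeft h ((Fin.lt_def.mp (hf (Fin.castSucc_lt_last i))).trans_le hlast)
  · rintro (⟨f, hf⟩ | hβ)
    · obtain ⟨hf, hαf⟩ := isOccurrence_one_iff.mp hf
      refine ⟨Fin.snoc (posLeft h ∘ f) ⟨j, by omega⟩,
        isOccurrence_one_iff.mpr ⟨?_, ?_⟩⟩
      · exact Fin.strictMono_snoc ((isOccurrence_glue_posLeft h α β).1.comp hf)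
          fun i => (f i).isLt
      · rw [Fin.comp_snoc, glue_of_eq h α β _ rfl]
        refine Fin.strictMono_snoc
          (fun a b hab => ((isOccurrence_glue_posLeft h α β).2 _ _).mp (hαf hab)) fun i => ?_
        rw [Fin.lt_def, Function.comp_apply, val_glue_of_lt h α β _ (f i).isLt, Fin.val_last]
        have := (α (f i)).isLt
        omega
    · exact (isOccurrence_glue_posRight h α β).hasPatt_trans hβ

end Glue

section GlueBijective

variable {j m n : ℕ} (h : j + 1 + m = n + 1)

theorem glue_symm_last (α : Perm (Fin j)) (β : Perm (Fin m)) :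
    (glue h α β).symm (Fin.last n) = ⟨j, by omega⟩ := by
  rw [symm_apply_eq, glue_of_eq h α β _ rfl]

theorem eq_of_glue_eq {j' m' : ℕ} (h' : j' + 1 + m' = n + 1) {α : Perm (Fin j)}
    {β : Perm (Fin m)} {α' : Perm (Fin j')} {β' : Perm (Fin m')}
    (heq : glue h α β = glue h' α' β') : j = j' := by
  simpa [glue_symm_last] using congrArg (fun π => (π.symm (Fin.last n)).val) heq

theorem glue_inj {α α' : Perm (Fin j)} {β β' : Perm (Fin m)} :
    glue h α β = glue h α' β' ↔ α = α' ∧ β = β' := by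
  refine ⟨fun heq => ⟨?_, ?_⟩, fun ⟨hα, hβ⟩ => hα ▸ hβ ▸ rfl⟩
  · ext a
    have := val_glue_of_lt h α β (posLeft h a) a.isLt
    rw [heq, val_glue_of_lt h α' β' _ a.isLt] at this
    exact (Nat.add_right_cancel this).symm
  · ext b
    rw [← val_glue_posRight h α β, heq, val_glue_posRight]

theorem exists_glue_eq_of_bounds (π : Perm (Fin (n + 1)))
    (hmid : π ⟨j, by omega⟩ = Fin.last n)
    (hleft : ∀ x : Fin (n + 1), x.val < j → m ≤ (π x).val)
    (hright : ∀ x : Fin (n + 1), j < x.val → (π x).val < m) :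
    ∃ α β, glue h α β = π := by
  have hlt_last (x : Fin (n + 1)) (hx : x.val < j) : (π x).val < n := by
    refine lt_of_le_of_ne (Nat.lt_succ_iff.mp (π x).isLt) fun hxn => ?_
    have := congrArg Fin.val (π.injective (Fin.ext (hxn.trans (congrArg Fin.val hmid).symm)))
    simp only at this
    omega
  have hα : Function.Injective fun a : Fin j => (⟨(π (posLeft h a)).val - m,
      by have := hlt_last (posLeft h a) a.isLt; have := a.isLt; omega⟩ : Fin j) := by
    intro a b hab
    have := hleft (posLeft h a) a.isLt
    have := hleft (posLeft h b) b.isLt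
    simp only [Fin.mk.injEq] at hab
    have hval : (π (posLeft h a)).val = (π (posLeft h b)).val := by omega
    have hab' := congrArg Fin.val (π.injective (Fin.ext hval))
    exact Fin.ext hab'
  have hβ : Function.Injective fun b : Fin m =>
      (⟨(π (posRight h b)).val, hright _ (by simp only [posRight]; omega)⟩ : Fin m) := by
    intro a b hab
    simp only [Fin.mk.injEq] at hab
    have hab' := congrArg Fin.val (π.injective (Fin.ext hab))
    simp only [posRight] at hab'
    exact Fin.ext (by omega)
  refine ⟨.ofBijective _ (Finite.injective_iff_bijective.mp hα),
    .ofBijective _ (Finite.injective_iff_bijective.mp hβ), ?_⟩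
  ext x
  rcases lt_trichotomy x.val j with hx | hx | hx
  · rw [val_glue_of_lt h _ _ x hx]
    have := hleft x hx
    simp only [ofBijective_apply, posLeft, Fin.eta]
    omega
  · rw [show x = ⟨j, by omega⟩ from Fin.ext hx, glue_of_eq h _ _ _ rfl, hmid]
  · rw [val_glue_of_gt h _ _ x hx]
    simp only [ofBijective_apply, posRight]
    congr 3
    omega

end GlueBijective

theorem card_filter_apply_lt {N : ℕ} (π : Perm (Fin N)) (v : Fin N) :
    #{x | π x < v} = v.val := by
  rw [← Fin.card_Iio v, ← card_map π.toEmbedding]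
  congr 1
  ext y
  simp only [mem_filter, mem_univ, true_and, mem_map, mem_Iio, coe_toEmbedding]
  exact ⟨fun ⟨x, hx, hxy⟩ => hxy ▸ hx,
    fun hy => ⟨π.symm y, by rwa [apply_symm_apply], apply_symm_apply π y⟩⟩

section Avoid132

variable {n : ℕ} {π : Perm (Fin (n + 1))}

theorem apply_lt_apply_of_not_hasPatt132 (hπ : ¬ HasPatt π patt132) {a p b : Fin (n + 1)}
    (hp : π p = Fin.last n) (hap : a < p) (hpb : p < b) : π b < π a := by
  by_contra! hab
  refine hπ (hasPatt_patt132_of_lt hap hpb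
    (lt_of_le_of_ne hab (π.injective.ne (hap.trans hpb).ne)) ?_)
  rw [hp]
  exact lt_of_le_of_ne (Fin.le_last _) fun e => hpb.ne' (π.injective (e.trans hp.symm))

theorem exists_glue_eq_of_not_hasPatt132 (hπ : ¬ HasPatt π patt132) :
    ∃ (j m : ℕ) (h : j + 1 + m = n + 1) (α : Perm (Fin j)) (β : Perm (Fin m)),
      glue h α β = π := by
  obtain ⟨p, hp⟩ := π.surjective (Fin.last n)
  have hpn := p.isLt
  refine ⟨p, n - p, by omega, exists_glue_eq_of_bounds _ π hp ?_ ?_⟩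
  · intro a (ha : a < p)
    have hsub : Ioi p ⊆ ({x | π x < π a} : Finset (Fin (n + 1))) := fun x hx => by
      simpa using apply_lt_apply_of_not_hasPatt132 hπ hp ha (mem_Ioi.mp hx)
    have := card_le_card hsub
    rw [Fin.card_Ioi, card_filter_apply_lt] at this
    omega
  · intro b (hb : p < b)
    have hsub : ({x | π x < π b} : Finset _) ⊆ (Ioi p).erase b := fun x hx => by
      rw [mem_filter] at hx
      refine mem_erase.mpr ⟨fun e => (e ▸ hx.2).false, mem_Ioi.mpr ?_⟩
      rcases lt_trichotomy x p with hxp | rfl | hpx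
      · exact absurd hx.2 (apply_lt_apply_of_not_hasPatt132 hπ hp hxp hb).asymm
      · exact absurd (hp ▸ hx.2) (Fin.le_last _).not_gt
      · exact hpx
    have := card_le_card hsub
    rw [card_filter_apply_lt, card_erase_of_mem (mem_Ioi.mpr hb), Fin.card_Ioi] at this
    omega

end Avoid132

theorem not_hasPatt_of_lt {n k : ℕ} (π : Perm (Fin n)) (τ : Perm (Fin k)) (hnk : n < k) :
    ¬ HasPatt π τ := fun ⟨_, hf, _⟩ =>
  hnk.not_ge (by simpa using Fintype.card_le_of_injective _ hf.injective)

theorem hasPatt_one_one {n : ℕ} (π : Perm (Fin (n + 1))) : HasPatt π (1 : Perm (Fin 1)) :=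
  ⟨fun _ => 0, Subsingleton.strictMono _, fun i j => by simp [Subsingleton.elim i j]⟩

open scoped Classical in
noncomputable def avoiders (K n : ℕ) : Finset (Perm (Fin n)) :=
  {π | ¬ HasPatt π patt132 ∧ ¬ HasPatt π (1 : Perm (Fin K))}

noncomputable def signedCount (K n : ℕ) : ℚ :=
  ∑ π ∈ avoiders K n, ((Perm.sign π : ℤ) : ℚ)

theorem mem_avoiders {K n : ℕ} {π : Perm (Fin n)} :
    π ∈ avoiders K n ↔ ¬ HasPatt π patt132 ∧ ¬ HasPatt π (1 : Perm (Fin K)) := by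
  simp [avoiders]

theorem coeff_Mgf (K n : ℕ) : coeff n (Mgf K) = signedCount K n := by
  classical
  have hcard (s : ℤˣ) : Nat.card {π : Perm (Fin n) // Perm.sign π = s ∧
      ¬ HasPatt π patt132 ∧ ¬ HasPatt π (1 : Perm (Fin K))} =
        #{π ∈ avoiders K n | Perm.sign π = s} := by
    rw [Nat.card_eq_fintype_card, Fintype.card_subtype]
    congr 1
    ext π
    simp [mem_avoiders, and_comm]
  rw [Mgf, coeff_mk, EvenAvoid, OddAvoid, hcard, hcard, signedCount,
    ← sum_filter_add_sum_filter_not _ (fun π => Perm.sign π = 1)]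
  have hneg (π) (hπ : π ∈ {π ∈ avoiders K n | ¬ Perm.sign π = 1}) :
      ((Perm.sign π : ℤ) : ℚ) = -1 := by
    rw [Int.units_ne_iff_eq_neg.mp (mem_filter.mp hπ).2]
    simp
  rw [sum_congr rfl fun π hπ => by rw [(mem_filter.mp hπ).2], sum_congr rfl hneg]
  simp_rw [← Int.units_ne_iff_eq_neg]
  simp [sub_eq_add_neg]

theorem signedCount_zero {K : ℕ} (hK : 1 ≤ K) : signedCount K 0 = 1 := by
  have : avoiders K 0 = {1} := by
    ext π
    simp only [mem_avoiders, mem_singleton, Subsingleton.elim π 1, iff_true]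
    exact ⟨not_hasPatt_of_lt _ _ (by norm_num), not_hasPatt_of_lt _ _ hK⟩
  simp [signedCount, this]

theorem signedCount_one_succ (n : ℕ) : signedCount 1 (n + 1) = 0 := by
  have : avoiders 1 (n + 1) = ∅ := by
    ext π
    simp [mem_avoiders, hasPatt_one_one]
  simp [signedCount, this]

theorem glue_mem_avoiders_iff {K j m n : ℕ} (h : j + 1 + m = n + 1) (α : Perm (Fin j))
    (β : Perm (Fin m)) :
    glue h α β ∈ avoiders (K + 1) (n + 1) ↔
      α ∈ avoiders K j ∧ β ∈ avoiders (K + 1) m := by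
  simp only [mem_avoiders, hasPatt_patt132_glue_iff, hasPatt_one_glue_iff]
  tauto

theorem signedCount_succ (K n : ℕ) :
    signedCount (K + 2) (n + 1) = ∑ x ∈ antidiagonal n,
      (-1) ^ (n * x.2) * signedCount (K + 1) x.1 * signedCount (K + 2) x.2 := by
  simp_rw [signedCount, mul_assoc, sum_mul_sum, mul_sum, ← sum_product', sum_sigma']
  symm
  refine sum_bij (fun x hx => glue (by have := mem_antidiagonal.mp (mem_sigma.mp hx).1; omega)
      x.2.1 x.2.2) ?_ ?_ ?_ ?_
  · rintro ⟨⟨j, m⟩, α, β⟩ hx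
    obtain ⟨-, hαβ⟩ := mem_sigma.mp hx
    exact (glue_mem_avoiders_iff _ α β).mpr (mem_product.mp hαβ)
  · rintro ⟨⟨j, m⟩, α, β⟩ hx ⟨⟨j', m'⟩, α', β'⟩ hx' heq
    have hjm := mem_antidiagonal.mp (mem_sigma.mp hx).1
    have hjm' := mem_antidiagonal.mp (mem_sigma.mp hx').1
    obtain rfl := eq_of_glue_eq _ _ heq
    obtain rfl : m = m' := by simp only at hjm hjm'; omega
    obtain ⟨rfl, rfl⟩ := (glue_inj _).mp heq
    rfl
  · intro π hπ
    obtain ⟨j, m, h, α, β, rfl⟩ := exists_glue_eq_of_not_hasPatt132 (mem_avoiders.mp hπ).1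
    exact ⟨⟨(j, m), α, β⟩, mem_sigma.mpr ⟨mem_antidiagonal.mpr (by simp only; omega),
      mem_product.mpr ((glue_mem_avoiders_iff h α β).mp hπ)⟩, rfl⟩
  · rintro ⟨⟨j, m⟩, α, β⟩ hx
    simp [sign_glue, mul_assoc]

theorem two_mul_neg_one_pow {R : Type*} [CommRing R] (j m : ℕ) :
    2 * (-1 : R) ^ ((j + m) * m) = (1 + (-1) ^ j) * (-1) ^ m + (1 - (-1) ^ j) := by
  rcases Nat.even_or_odd m with hm | hm
  · rw [(hm.mul_left _).neg_one_pow, hm.neg_one_pow]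
    ring
  rcases Nat.even_or_odd j with hj | hj
  · rw [((hj.add_odd hm).mul hm).neg_one_pow, hj.neg_one_pow, hm.neg_one_pow]
    ring
  · rw [((hj.add_odd hm).mul_right _).neg_one_pow, hj.neg_one_pow, hm.neg_one_pow]
    ring

theorem coeff_evalNegHom {R : Type*} [CommRing R] (n : ℕ) (f : R⟦X⟧) :
    coeff n (evalNegHom f) = (-1) ^ n * coeff n f :=
  coeff_rescale f (-1) n

theorem coeff_two_mul {R : Type*} [CommRing R] (n : ℕ) (f : R⟦X⟧) :
    coeff n (2 * f) = 2 * coeff n f := by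
  rw [← map_ofNat (C (R := R)) 2, coeff_C_mul]

/-- `Mgf (K + 1) ± evalNegHom (Mgf (K + 1))` is twice the even/odd part of `Mgf (K + 1)`; this is
how the sign `(-1) ^ (n * m)` of `signedCount_succ` enters. -/
theorem Mgf_functional_eq (K : ℕ) :
    2 * Mgf (K + 2) = 2 + X * ((Mgf (K + 1) + evalNegHom (Mgf (K + 1))) * evalNegHom (Mgf (K + 2))
      + (Mgf (K + 1) - evalNegHom (Mgf (K + 1))) * Mgf (K + 2)) := by
  ext n
  rcases n with _ | n
  · simp [coeff_two_mul, coeff_Mgf, signedCount_zero, map_ofNat]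
  rw [coeff_two_mul, map_add, coeff_succ_X_mul, coeff_Mgf, signedCount_succ, mul_sum, map_add,
    coeff_mul, coeff_mul, ← sum_add_distrib, ← map_ofNat (C (R := ℚ)) 2, coeff_C,
    if_neg n.succ_ne_zero, zero_add]
  refine sum_congr rfl fun x hx => ?_
  simp only [map_add, map_sub, coeff_evalNegHom, coeff_Mgf]
  rw [← mem_antidiagonal.mp hx]
  linear_combination signedCount (K + 1) x.1 * signedCount (K + 2) x.2 *
    two_mul_neg_one_pow (R := ℚ) x.1 x.2

theorem evalNegHom_evalNegHom {R : Type*} [CommRing R] (f : R⟦X⟧) :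
    evalNegHom (evalNegHom f) = f := by
  simp [evalNegHom, rescale_rescale]

theorem evalNegHom_expand_two {R : Type*} [CommRing R] (f : R⟦X⟧) :
    evalNegHom (expand 2 two_ne_zero f) = expand 2 two_ne_zero f := by
  ext n
  rw [coeff_evalNegHom, coeff_expand]
  split_ifs with h
  · rw [(even_iff_two_dvd.mpr h).neg_one_pow, one_mul]
  · rw [mul_zero]

instance {R : Type*} [Semiring R] [CharZero R] : CharZero R⟦X⟧ :=
  RingHom.charZero constantCoeff

theorem Mgf_even_of_odd {K : ℕ} {T S : ℚ⟦X⟧} (hT : evalNegHom T = T)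
    (hST : S * (1 - X ^ 2 * T) = 1) (hodd : Mgf (K + 1) = 1 + X * T) :
    Mgf (K + 2) * (1 + X ^ 2 * S ^ 2) = (1 + X * S) * S := by
  have hfun := Mgf_functional_eq K
  rw [hodd, map_add, map_one, map_mul, evalNegHom_X, hT] at hfun
  set M := Mgf (K + 2)
  have h1 : M = 1 + X * evalNegHom M + X ^ 2 * T * M :=
    mul_left_cancel₀ two_ne_zero (by linear_combination hfun)
  have h2 : evalNegHom M = 1 - X * M + X ^ 2 * T * evalNegHom M := by
    have := congrArg evalNegHom h1
    simp only [map_add, map_one, map_mul, map_pow, evalNegHom_X, hT,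
      evalNegHom_evalNegHom] at this
    linear_combination this
  linear_combination (S ^ 2 * (1 - X ^ 2 * T)) * h1 + (S ^ 2 * X) * h2 +
    (S - M * ((1 - X ^ 2 * T) * S + 1)) * hST

theorem Mgf_odd_of_even {K : ℕ} {S : ℚ⟦X⟧} (hS : evalNegHom S = S)
    (heven : Mgf (K + 1) * (1 + X ^ 2 * S ^ 2) = (1 + X * S) * S) :
    Mgf (K + 2) = 1 + X * S := by
  have hfun := Mgf_functional_eq K
  have heven' : evalNegHom (Mgf (K + 1)) * (1 + X ^ 2 * S ^ 2) = (1 - X * S) * S := by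
    have := congrArg evalNegHom heven
    simp only [map_add, map_one, map_mul, map_pow, evalNegHom_X, hS] at this
    linear_combination this
  set M := Mgf (K + 2)
  have h1 : M = 1 + X ^ 2 * S ^ 2 + X * S * evalNegHom M :=
    mul_left_cancel₀ two_ne_zero (by
      linear_combination (1 + X ^ 2 * S ^ 2) * hfun + (X * evalNegHom M) * (heven + heven') +
        (X * M) * (heven - heven'))
  have h2 : evalNegHom M = 1 + X ^ 2 * S ^ 2 - X * S * M := by
    have := congrArg evalNegHom h1
    simp only [map_add, map_one, map_mul, map_pow, evalNegHom_X, hS,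
      evalNegHom_evalNegHom] at this
    linear_combination this
  have hD : (1 + X ^ 2 * S ^ 2 : ℚ⟦X⟧) ≠ 0 := fun h => by
    simpa using congrArg constantCoeff h
  exact mul_right_cancel₀ hD (by linear_combination h1 + (X * S) * h2)

theorem Rps_succ_mul (k : ℕ) : Rps (k + 1) * (1 - X * Rps k) = 1 :=
  PowerSeries.inv_mul_cancel _ (by simp)

theorem expand_Rps_succ_mul (k : ℕ) :
    expand 2 two_ne_zero (Rps (k + 1)) * (1 - X ^ 2 * expand 2 two_ne_zero (Rps k)) = 1 := by
  simpa using congrArg (expand 2 two_ne_zero) (Rps_succ_mul k)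

theorem Mgf_one : Mgf 1 = 1 := by
  ext n
  rw [coeff_Mgf, coeff_one]
  rcases n with _ | n
  · exact signedCount_zero le_rfl
  · exact signedCount_one_succ n

theorem Mgf_two_mul_add_one (k : ℕ) : Mgf (2 * k + 1) = 1 + X * expand 2 two_ne_zero (Rps k) := by
  induction k with
  | zero => simp [Mgf_one, Rps]
  | succ k ih =>
    exact Mgf_odd_of_even (evalNegHom_expand_two _)
      (Mgf_even_of_odd (evalNegHom_expand_two _) (expand_Rps_succ_mul k) ih)

theorem Mgf_two_mul_add_two (k : ℕ) :
    Mgf (2 * k + 2) =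
      (1 + X * expand 2 two_ne_zero (Rps (k + 1))) * expand 2 two_ne_zero (Rps (k + 1)) *
      (1 + X ^ 2 * expand 2 two_ne_zero (Rps (k + 1)) ^ 2)⁻¹ := by
  rw [eq_mul_inv_iff_mul_eq (by simp)]
  exact Mgf_even_of_odd (evalNegHom_expand_two _) (expand_Rps_succ_mul k) (Mgf_two_mul_add_one k)

theorem sub2_eq_expand (f : ℚ⟦X⟧) : sub2 f = expand 2 two_ne_zero f := by
  ext n
  rw [sub2, coeff_mk, coeff_expand]

/-- For all `k ≥ 1`, `M_{2k−1}(x) = 1 + x·R_{k−1}(x²)` and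
`M_{2k}(x) = (1 + x·R_k(x²))·R_k(x²)/(1 + x²·R_k(x²)²)`. -/
theorem Mgf_increasing (k : ℕ) (hk : 1 ≤ k) :
    Mgf (2 * k - 1) = 1 + PowerSeries.X * sub2 (Rps (k - 1)) ∧
    Mgf (2 * k) =
      (1 + PowerSeries.X * sub2 (Rps k)) * sub2 (Rps k) *
        (1 + PowerSeries.X ^ 2 * (sub2 (Rps k)) ^ 2)⁻¹ := by
  obtain ⟨k, rfl⟩ := Nat.exists_eq_add_of_le' hk
  simp only [sub2_eq_expand, Nat.add_sub_cancel, show 2 * (k + 1) = 2 * k + 2 by ring]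
  exact ⟨Mgf_two_mul_add_one k, Mgf_two_mul_add_two k⟩
end
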